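/- arXiv:2310.19219 — 7 statements merged into one kernel-verified Lean document; each statement's English description precedes it below -/
import Mathlib

section
/- Let K be a finite set with at least two elements, let k(x,y) ≥ 0 (x ≠ y) be transition rates whose digraph G (arc (x,y) whenever k(x,y) > 0) is strongly connected, and let L be the backward generator. For every nonempty proper subset H ⊊ K, every eigenvalue of the principal submatrix of L obtained by restricting rows and columns to H has strictly negative real part. -/
open scoped Classical

/-- The backward generator `L` of the Markov jump process with rates `k`:
`L x y = k x y` for `x ≠ y` and `L x x = -∑_{z ≠ x} k x z`. -/
noncomputable def gen {K : Type*} [Fintype K] [DecidableEq K] (k : K → K → ℝ) :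
    Matrix K K ℝ :=
  Matrix.of fun x y => if x = y then -∑ z ∈ Finset.univ.erase x, k x z else k x y

/-- Strong connectivity (irreducibility) of the digraph with an arc `(x,y)` whenever
`k x y > 0`. -/
def StronglyConnected {K : Type*} (k : K → K → ℝ) : Prop :=
  ∀ x y : K, Relation.ReflTransGen (fun a b => 0 < k a b) x y

open Finset
open scoped Matrix

/-!
Suppose `Re μ ≥ 0` and extend the eigenvector `v` by zero outside `H`. At a state `x` where `|v|`
is maximal, the eigen equation `μ v(x) = ∑_{z ≠ x} k(x,z) (v(z) - v(x))` and the triangle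
inequality force `|v(z)| = |v(x)|` at every `z` with `k(x,z) > 0` (a maximum principle for the
generator). By strong connectivity the positive maximum of `|v|` then propagates to a state
outside `H`, where the extension vanishes.
-/

section

variable {K : Type*}

theorem Matrix.submatrix_val_mulVec_comp_val {ι R : Type*} [Fintype K]
    [NonUnitalNonAssocSemiring R] (M : Matrix K K R) (r : ι → K) {H : Finset K} {w : K → R}
    (hw : ∀ z ∉ H, w z = 0) :
    M.submatrix r (Subtype.val : H → K) *ᵥ (w ∘ Subtype.val) = (M *ᵥ w) ∘ r := by
  ext i
  simp only [Matrix.mulVec, dotProduct, Matrix.submatrix_apply, Function.comp_apply]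
  rw [sum_coe_sort H fun z => M (r i) z * w z]
  exact sum_subset (subset_univ H) fun z _ hz => by rw [hw z hz, mul_zero]

theorem StronglyConnected.forall_of_closed {k : K → K → ℝ} (hirr : StronglyConnected k)
    {P : K → Prop} (hP : ∀ x y, P x → 0 < k x y → P y) {x : K} (hx : P x) (y : K) : P y := by
  induction hirr x y with
  | refl => exact hx
  | tail _ hbc ih => exact hP _ _ ih hbc

variable [Fintype K] [DecidableEq K]

theorem gen_map_mulVec_apply (k : K → K → ℝ) (w : K → ℂ) (x : K) :
    ((gen k).map Complex.ofReal *ᵥ w) x = ∑ z ∈ univ.erase x, (k x z : ℂ) * (w z - w x) := by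
  have hoff : ∀ z ∈ univ.erase x, (gen k x z : ℂ) = k x z := fun z hz => by
    simp [gen, (ne_of_mem_erase hz).symm]
  simp only [Matrix.mulVec, dotProduct, Matrix.map_apply]
  rw [← add_sum_erase _ _ (mem_univ x), sum_congr rfl fun z hz => by rw [hoff z hz]]
  simp only [gen, Matrix.of_apply, mul_sub, sum_sub_distrib, ← sum_mul]
  push_cast
  ring

theorem norm_eq_of_forall_norm_le_of_gen_eigen {k : K → K → ℝ} (hk : ∀ x y, x ≠ y → 0 ≤ k x y)
    {w : K → ℂ} {μ : ℂ} (hμ : 0 ≤ μ.re) {x : K} (hmax : ∀ z, ‖w z‖ ≤ ‖w x‖)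
    (heig : ∑ z ∈ univ.erase x, (k x z : ℂ) * (w z - w x) = μ * w x)
    {y : K} (hxy : 0 < k x y) : ‖w y‖ = ‖w x‖ := by
  obtain rfl | hyx := eq_or_ne y x
  · rfl
  set M := ‖w x‖
  set S := ∑ z ∈ univ.erase x, k x z
  have hknn : ∀ z ∈ univ.erase x, 0 ≤ k x z := fun z hz => hk x z (ne_of_mem_erase hz).symm
  have hrow : (μ + S) * w x = ∑ z ∈ univ.erase x, (k x z : ℂ) * w z := by
    simp only [mul_sub, sum_sub_distrib, ← sum_mul] at heig
    push_cast [S]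
    linear_combination -heig
  have hbound : (μ.re + S) * M ≤ ∑ z ∈ univ.erase x, k x z * ‖w z‖ :=
    calc (μ.re + S) * M ≤ ‖μ + S‖ * M := by
          gcongr
          simpa using Complex.re_le_norm (μ + S)
      _ = ‖∑ z ∈ univ.erase x, (k x z : ℂ) * w z‖ := by rw [← hrow, norm_mul]
      _ ≤ ∑ z ∈ univ.erase x, k x z * ‖w z‖ := by
          refine (norm_sum_le _ _).trans_eq (sum_congr rfl fun z hz => ?_)
          rw [norm_mul, Complex.norm_real, Real.norm_of_nonneg (hknn z hz)]
  have hdefect : ∑ z ∈ univ.erase x, k x z * (M - ‖w z‖) = 0 := by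
    refine le_antisymm ?_ (sum_nonneg fun z hz => mul_nonneg (hknn z hz) (sub_nonneg.2 (hmax z)))
    simp only [mul_sub, sum_sub_distrib, ← sum_mul]
    nlinarith [norm_nonneg (w x)]
  have := (sum_eq_zero_iff_of_nonneg fun z hz =>
    mul_nonneg (hknn z hz) (sub_nonneg.2 (hmax z))).1 hdefect y (mem_erase.2 ⟨hyx, mem_univ y⟩)
  linarith [(mul_eq_zero.1 this).resolve_left hxy.ne']

end

theorem submatrix_eigenvalue_re_neg_general
    {K : Type*} [Fintype K] [DecidableEq K]
    (k : K → K → ℝ) (hk : ∀ x y : K, x ≠ y → 0 ≤ k x y)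
    (hirr : StronglyConnected k)
    (H : Finset K) (hHproper : H ≠ Finset.univ)
    (μ : ℂ) (v : {x // x ∈ H} → ℂ) (hv : v ≠ 0)
    (heig : (Matrix.of fun x y : {x // x ∈ H} =>
        ((gen k x.1 y.1 : ℝ) : ℂ)).mulVec v = μ • v) :
    μ.re < 0 := by
  by_contra! hμ
  obtain ⟨w, rfl, hw_out⟩ : ∃ w : K → ℂ, w ∘ Subtype.val = v ∧ ∀ z ∉ H, w z = 0 :=
    ⟨fun z => if h : z ∈ H then v ⟨z, h⟩ else 0, by ext; simp, fun z hz => by simp [hz]⟩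
  have hw_eig (x : H) : ∑ z ∈ univ.erase x.1, (k x z : ℂ) * (w z - w x) = μ * w x := by
    have := congrFun heig x
    rw [show Matrix.of (fun x y : H => ((gen k x.1 y.1 : ℝ) : ℂ)) =
      ((gen k).map Complex.ofReal).submatrix Subtype.val Subtype.val from rfl,
      Matrix.submatrix_val_mulVec_comp_val _ _ hw_out] at this
    simpa [gen_map_mulVec_apply] using this
  obtain ⟨x, hx⟩ := Function.ne_iff.mp hv
  have : Nonempty K := ⟨x.1⟩
  obtain ⟨x₀, hx₀⟩ := Finite.exists_max fun z => ‖w z‖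
  have hM : 0 < ‖w x₀‖ := (norm_pos_iff.mpr hx).trans_le (hx₀ x)
  have hmem {x : K} (hx : ‖w x‖ = ‖w x₀‖) : x ∈ H := by
    by_contra hxH
    rw [hw_out x hxH, norm_zero] at hx
    exact hM.ne hx
  have hclosed (x y : K) (hx : ‖w x‖ = ‖w x₀‖) (hxy : 0 < k x y) : ‖w y‖ = ‖w x₀‖ :=
    hx ▸ norm_eq_of_forall_norm_le_of_gen_eigen hk hμ (hx ▸ hx₀) (hw_eig ⟨x, hmem hx⟩) hxy
  obtain ⟨z, hz⟩ : ∃ z, z ∉ H := by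
    simpa [eq_univ_iff_forall] using hHproper
  exact hz (hmem (hirr.forall_of_closed hclosed rfl z))

/-- Every eigenvalue of the principal submatrix of the backward generator `L` obtained by
restricting rows and columns to a nonempty proper subset `H ⊊ K` has strictly negative
real part. -/
theorem submatrix_eigenvalue_re_neg
    {K : Type*} [Fintype K] [DecidableEq K] (hcard : 2 ≤ Fintype.card K)
    (k : K → K → ℝ) (hk : ∀ x y : K, x ≠ y → 0 ≤ k x y)
    (hirr : StronglyConnected k)
    (H : Finset K) (hH : H.Nonempty) (hHproper : H ≠ Finset.univ)
    (μ : ℂ) (v : {x // x ∈ H} → ℂ) (hv : v ≠ 0)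
    (heig : (Matrix.of fun x y : {x // x ∈ H} =>
        ((gen k x.1 y.1 : ℝ) : ℂ)).mulVec v = μ • v) :
    μ.re < 0 :=
  submatrix_eigenvalue_re_neg_general k hk hirr H hHproper μ v hv heig
end

section
/- Let H ⊊ K be a nonempty proper subset and let L_H be the generator of the stopped process, i.e. the K×K matrix with rows indexed by x ∈ H equal to the corresponding rows of L and rows indexed by x ∉ H equal to zero. Then there exist constants C ≥ 0 and c > 0 such that for all x, y ∈ H and all t ≥ 0, the matrix exponential satisfies (e^{t L_H})_{x,y} ≤ C e^{−c t}; in particular (e^{t L_H} 1_H)(x) ≤ C e^{−c t} for all x, where 1_H is the indicator of H. -/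
open scoped Classical

/-- The generator `L_H` of the stopped process: rows indexed by `x ∈ H` agree with those of
`L`, rows indexed by `x ∉ H` vanish. -/
noncomputable def genH {K : Type*} [Fintype K] [DecidableEq K] (k : K → K → ℝ)
    (H : Finset K) : Matrix K K ℝ :=
  Matrix.of fun x y => if x ∈ H then gen k x y else 0

/-!
Shifting a Metzler matrix `A` (nonnegative off the diagonal) by `m • 1` makes it entrywise
nonnegative, and `exp (A + m • 1) = exp m • exp A`, so `P t = exp (t • A)` is entrywise
nonnegative for `t ≥ 0`, with `exp A` positive along every path of positive entries of `A`.
For the stopped generator `A = L_H` we have `A *ᵥ 1 = 0`, so `P t` is stochastic, and the rows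
outside `H` vanish, so `(P t *ᵥ 1_H) z = 0` for `z ∉ H`. Irreducibility gives every `x ∈ H` a
path of positive entries of `L_H` leaving `H`, whence `P 1 *ᵥ 1_H ≤ θ • 1_H` for some `θ < 1`.
Writing `P t = P (t - ⌊t⌋) * (P 1) ^ ⌊t⌋` gives `P t *ᵥ 1_H ≤ θ ^ ⌊t⌋`, i.e. exponential decay,
and `P t x y ≤ (P t *ᵥ 1_H) x` for `y ∈ H`.
-/

open Matrix Filter Topology
open scoped Nat

namespace Matrix
variable {n : Type*} [Fintype n] [DecidableEq n]

theorem hasSum_exp_mulVec (A : Matrix n n ℝ) (v : n → ℝ) :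
    HasSum (fun k : ℕ => (k ! : ℝ)⁻¹ • (A ^ k *ᵥ v)) (NormedSpace.exp A *ᵥ v) := by
  have h : HasSum (fun k : ℕ => (k ! : ℝ)⁻¹ • A ^ k) (NormedSpace.exp A) := by
    let _ : NormedRing (Matrix n n ℝ) := Matrix.linftyOpNormedRing
    let _ : NormedAlgebra ℝ (Matrix n n ℝ) := Matrix.linftyOpNormedAlgebra
    exact NormedSpace.exp_series_hasSum_exp' A
  simpa [Function.comp_def, mulVec.addMonoidHomLeft, smul_mulVec] using
    h.map (mulVec.addMonoidHomLeft v) (continuous_id.matrix_mulVec continuous_const)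

theorem exp_mulVec_of_mulVec_eq_zero {A : Matrix n n ℝ} {v : n → ℝ} (h : A *ᵥ v = 0) :
    NormedSpace.exp A *ᵥ v = v := by
  refine (hasSum_exp_mulVec A v).unique ?_
  convert hasSum_single (f := fun k : ℕ => (k ! : ℝ)⁻¹ • (A ^ k *ᵥ v)) 0 fun k hk => ?_
  · simp
  · obtain ⟨k, rfl⟩ := Nat.exists_eq_add_one_of_ne_zero hk
    rw [pow_succ, ← mulVec_mulVec, h, mulVec_zero, smul_zero]

theorem exp_mulVec_apply_of_row_eq_zero {A : Matrix n n ℝ} {i : n} (h : A i = 0) (v : n → ℝ) :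
    (NormedSpace.exp A *ᵥ v) i = v i := by
  refine ((Pi.hasSum.mp (hasSum_exp_mulVec A v)) i).unique ?_
  convert hasSum_single (f := fun k : ℕ => ((k ! : ℝ)⁻¹ • (A ^ k *ᵥ v)) i) 0 fun k hk => ?_
  · simp
  · obtain ⟨k, rfl⟩ := Nat.exists_eq_add_one_of_ne_zero hk
    rw [pow_succ', ← mulVec_mulVec, Pi.smul_apply, mulVec, dotProduct, h]
    simp

theorem exp_add_smul_one (A : Matrix n n ℝ) (m : ℝ) :
    NormedSpace.exp (A + m • 1) = Real.exp m • NormedSpace.exp A := by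
  have h : NormedSpace.exp (m • 1 : Matrix n n ℝ) = Real.exp m • 1 := by
    let _ : NormedRing (Matrix n n ℝ) := Matrix.linftyOpNormedRing
    let _ : NormedAlgebra ℝ (Matrix n n ℝ) := Matrix.linftyOpNormedAlgebra
    have h' : algebraMap ℝ (Matrix n n ℝ) (NormedSpace.exp m) =
        NormedSpace.exp (algebraMap ℝ (Matrix n n ℝ) m) := NormedSpace.algebraMap_exp_comm m
    rwa [← Real.exp_eq_exp_ℝ, Algebra.algebraMap_eq_smul_one, Algebra.algebraMap_eq_smul_one,
      eq_comm] at h'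
  rw [exp_add_of_commute _ _ ((Commute.one_right A).smul_right m), h, mul_smul_comm, mul_one]

theorem hasSum_exp_apply (A : Matrix n n ℝ) (i j : n) :
    HasSum (fun k : ℕ => (k ! : ℝ)⁻¹ * (A ^ k) i j) (NormedSpace.exp A i j) := by
  simpa using Pi.hasSum.mp (hasSum_exp_mulVec A (Pi.single j 1)) i

theorem exists_pow_apply_pos_of_reflTransGen {A : Matrix n n ℝ} (hA : ∀ i j, 0 ≤ A i j)
    {i j : n} (h : Relation.ReflTransGen (fun a b => 0 < A a b) i j) :
    ∃ k : ℕ, 0 < (A ^ k) i j := by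
  induction h using Relation.ReflTransGen.head_induction_on with
  | refl => exact ⟨0, by simp⟩
  | @head a b hab _ ih =>
    obtain ⟨k, hk⟩ := ih
    refine ⟨k + 1, ?_⟩
    rw [pow_succ', mul_apply]
    exact Finset.sum_pos' (fun l _ => mul_nonneg (hA a l) (pow_apply_nonneg hA k l j))
      ⟨b, Finset.mem_univ b, mul_pos hab hk⟩

theorem exp_apply_nonneg {A : Matrix n n ℝ} (hA : ∀ i j, 0 ≤ A i j) (i j : n) :
    0 ≤ NormedSpace.exp A i j :=
  (hasSum_exp_apply A i j).nonneg fun k => mul_nonneg (by positivity) (pow_apply_nonneg hA k i j)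

theorem exp_apply_pos_of_pow_apply_pos {A : Matrix n n ℝ} (hA : ∀ i j, 0 ≤ A i j) {k : ℕ}
    {i j : n} (h : 0 < (A ^ k) i j) : 0 < NormedSpace.exp A i j :=
  (by positivity : 0 < (k ! : ℝ)⁻¹ * (A ^ k) i j).trans_le <|
    le_hasSum (hasSum_exp_apply A i j) k fun l _ =>
      mul_nonneg (by positivity) (pow_apply_nonneg hA l i j)

def IsMetzler (A : Matrix n n ℝ) : Prop :=
  ∀ i j, i ≠ j → 0 ≤ A i j

omit [Fintype n] [DecidableEq n] in
theorem IsMetzler.smul {A : Matrix n n ℝ} (hA : A.IsMetzler) {t : ℝ} (ht : 0 ≤ t) :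
    (t • A).IsMetzler :=
  fun i j hij => mul_nonneg ht (hA i j hij)

theorem IsMetzler.exists_add_smul_one_nonneg {A : Matrix n n ℝ} (hA : A.IsMetzler) :
    ∃ m : ℝ, 0 ≤ m ∧ ∀ i j, 0 ≤ (A + m • 1) i j := by
  refine ⟨∑ i, |A i i|, Finset.sum_nonneg fun i _ => abs_nonneg _, fun i j => ?_⟩
  rcases eq_or_ne i j with rfl | hij
  · have : |A i i| ≤ ∑ l, |A l l| :=
      Finset.single_le_sum (f := fun l => |A l l|) (fun l _ => abs_nonneg _) (Finset.mem_univ i)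
    simp only [add_apply, smul_apply, one_apply_eq, smul_eq_mul, mul_one]
    linarith [neg_abs_le (A i i)]
  · simpa [one_apply_ne hij] using hA i j hij

theorem IsMetzler.exp_apply_nonneg {A : Matrix n n ℝ} (hA : A.IsMetzler) (i j : n) :
    0 ≤ NormedSpace.exp A i j := by
  obtain ⟨m, -, hm⟩ := hA.exists_add_smul_one_nonneg
  have := Matrix.exp_apply_nonneg hm i j
  rw [exp_add_smul_one, smul_apply, smul_eq_mul] at this
  exact (mul_nonneg_iff_of_pos_left (Real.exp_pos m)).mp this

theorem IsMetzler.exp_apply_pos_of_reflTransGen {A : Matrix n n ℝ} (hA : A.IsMetzler) {i j : n}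
    (h : Relation.ReflTransGen (fun a b => 0 < A a b) i j) : 0 < NormedSpace.exp A i j := by
  obtain ⟨m, hm0, hm⟩ := hA.exists_add_smul_one_nonneg
  have hle : ∀ a b, A a b ≤ (A + m • 1) a b := fun a b => by
    by_cases hab : a = b <;> simp [hab, hm0]
  obtain ⟨k, hk⟩ := exists_pow_apply_pos_of_reflTransGen hm
    (Relation.ReflTransGen.mono (fun a b (hab : 0 < A a b) => hab.trans_le (hle a b)) i j h)
  have := exp_apply_pos_of_pow_apply_pos hm hk
  rw [exp_add_smul_one, smul_apply, smul_eq_mul] at this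
  exact (mul_pos_iff_of_pos_left (Real.exp_pos m)).mp this

omit [DecidableEq n] in
theorem mulVec_mono_of_nonneg {m : Type*} {P : Matrix m n ℝ} (hP : ∀ i j, 0 ≤ P i j)
    {v w : n → ℝ} (h : v ≤ w) : P *ᵥ v ≤ P *ᵥ w :=
  fun i => Finset.sum_le_sum fun j _ => mul_le_mul_of_nonneg_left (h j) (hP i j)

omit [DecidableEq n] in
theorem apply_mul_le_mulVec {m : Type*} {P : Matrix m n ℝ} (hP : ∀ i j, 0 ≤ P i j)
    {v : n → ℝ} (hv : 0 ≤ v) (i : m) (j : n) : P i j * v j ≤ (P *ᵥ v) i :=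
  Finset.single_le_sum (f := fun l => P i l * v l) (fun l _ => mul_nonneg (hP i l) (hv l))
    (Finset.mem_univ j)

theorem pow_mulVec_le_pow_smul {P : Matrix n n ℝ} (hP : ∀ i j, 0 ≤ P i j) {v : n → ℝ} {θ : ℝ}
    (hθ : 0 ≤ θ) (h : P *ᵥ v ≤ θ • v) (k : ℕ) : P ^ k *ᵥ v ≤ θ ^ k • v := by
  induction k with
  | zero => simp
  | succ k ih =>
    calc P ^ (k + 1) *ᵥ v = P ^ k *ᵥ (P *ᵥ v) := by rw [pow_succ, mulVec_mulVec]
      _ ≤ P ^ k *ᵥ (θ • v) := mulVec_mono_of_nonneg (pow_apply_nonneg hP k) h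
      _ = θ • (P ^ k *ᵥ v) := mulVec_smul _ _ _
      _ ≤ θ • (θ ^ k • v) := smul_le_smul_of_nonneg_left ih hθ
      _ = θ ^ (k + 1) • v := by rw [smul_smul, pow_succ']

theorem exp_smul_mulVec_one {A : Matrix n n ℝ} (hA : A *ᵥ 1 = 0) (t : ℝ) :
    NormedSpace.exp (t • A) *ᵥ 1 = 1 :=
  exp_mulVec_of_mulVec_eq_zero (by rw [smul_mulVec, hA, smul_zero])

theorem IsMetzler.exp_smul_mulVec_le_pow_floor {A : Matrix n n ℝ} (hA : A.IsMetzler)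
    (hrow : A *ᵥ 1 = 0) {v : n → ℝ} (hv1 : v ≤ 1) {θ : ℝ} (hθ : 0 ≤ θ)
    (hcontr : NormedSpace.exp A *ᵥ v ≤ θ • v) {t : ℝ} (ht : 0 ≤ t) (i : n) :
    (NormedSpace.exp (t • A) *ᵥ v) i ≤ θ ^ ⌊t⌋₊ := by
  set r := t - ⌊t⌋₊
  have hr : 0 ≤ r := sub_nonneg.2 (Nat.floor_le ht)
  have hsplit :
      NormedSpace.exp (t • A) = NormedSpace.exp (r • A) * NormedSpace.exp A ^ ⌊t⌋₊ := by
    rw [← exp_nsmul, ← exp_add_of_commute _ _ (((Commute.refl A).smul_left r).smul_right _),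
      ← Nat.cast_smul_eq_nsmul ℝ, ← add_smul, sub_add_cancel]
  have hP := (hA.smul hr).exp_apply_nonneg
  calc (NormedSpace.exp (t • A) *ᵥ v) i
        = (NormedSpace.exp (r • A) *ᵥ (NormedSpace.exp A ^ ⌊t⌋₊ *ᵥ v)) i := by
          rw [hsplit, mulVec_mulVec]
    _ ≤ (NormedSpace.exp (r • A) *ᵥ (θ ^ ⌊t⌋₊ • v)) i :=
          mulVec_mono_of_nonneg hP (pow_mulVec_le_pow_smul hA.exp_apply_nonneg hθ hcontr _) i
    _ = θ ^ ⌊t⌋₊ * (NormedSpace.exp (r • A) *ᵥ v) i := by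
          rw [mulVec_smul, Pi.smul_apply, smul_eq_mul]
    _ ≤ θ ^ ⌊t⌋₊ * (NormedSpace.exp (r • A) *ᵥ 1) i :=
          mul_le_mul_of_nonneg_left (mulVec_mono_of_nonneg hP hv1 i) (by positivity)
    _ = θ ^ ⌊t⌋₊ := by rw [exp_smul_mulVec_one hrow, Pi.one_apply, mul_one]

theorem IsMetzler.exists_exp_mulVec_indicator_le {A : Matrix n n ℝ} (hA : A.IsMetzler)
    (hrow : A *ᵥ 1 = 0) (S : Finset n) (hstop : ∀ i ∉ S, A i = 0)
    (hexit : ∀ i ∈ S, ∃ j ∉ S, Relation.ReflTransGen (fun a b => 0 < A a b) i j) :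
    ∃ θ : ℝ, 0 ≤ θ ∧ θ < 1 ∧ NormedSpace.exp A *ᵥ (fun j => if j ∈ S then (1 : ℝ) else 0) ≤
      θ • fun j => if j ∈ S then (1 : ℝ) else 0 := by
  set v : n → ℝ := fun j => if j ∈ S then 1 else 0
  have hlt : ∀ i ∈ S, (NormedSpace.exp A *ᵥ v) i < 1 := by
    intro i hi
    obtain ⟨j, hj, hpath⟩ := hexit i hi
    calc (NormedSpace.exp A *ᵥ v) i < (NormedSpace.exp A *ᵥ 1) i :=
          Finset.sum_lt_sum
            (fun l _ => mul_le_mul_of_nonneg_left (by simp only [v]; split_ifs <;> norm_num)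
              (hA.exp_apply_nonneg i l))
            ⟨j, Finset.mem_univ j, by simpa [v, hj] using hA.exp_apply_pos_of_reflTransGen hpath⟩
      _ = 1 := by rw [exp_mulVec_of_mulVec_eq_zero hrow, Pi.one_apply]
  -- `S` is finite, so some `θ < 1` exceeds all the values `(exp A *ᵥ v) i < 1`, `i ∈ S`.
  have hnear : ∀ᶠ θ in 𝓝[<] (1 : ℝ), 0 < θ ∧ ∀ i ∈ S, (NormedSpace.exp A *ᵥ v) i < θ :=
    nhdsWithin_le_nhds <| (eventually_gt_nhds one_pos).and <|
      (Filter.eventually_all_finset S).2 fun i hi => eventually_gt_nhds (hlt i hi)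
  obtain ⟨θ, ⟨hθ0, hθS⟩, hθ1⟩ := (hnear.and self_mem_nhdsWithin).exists
  refine ⟨θ, hθ0.le, hθ1, fun i => ?_⟩
  by_cases hi : i ∈ S
  · simpa [v, hi] using (hθS i hi).le
  · simp [v, hi, exp_mulVec_apply_of_row_eq_zero (hstop i hi)]

end Matrix

theorem exists_pow_floor_le_exp {θ : ℝ} (hθ0 : 0 ≤ θ) (hθ1 : θ < 1) :
    ∃ C : ℝ, 0 ≤ C ∧ ∃ c : ℝ, 0 < c ∧ ∀ t : ℝ, 0 ≤ t → θ ^ ⌊t⌋₊ ≤ C * Real.exp (-c * t) := by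
  set θ' := max θ (1 / 2)
  have h0 : 0 < θ' := lt_max_of_lt_right (by norm_num)
  have h1 : θ' < 1 := max_lt hθ1 (by norm_num)
  refine ⟨θ'⁻¹, by positivity, -Real.log θ', neg_pos.2 (Real.log_neg h0 h1), fun t ht => ?_⟩
  calc θ ^ ⌊t⌋₊ ≤ θ' ^ ⌊t⌋₊ := pow_le_pow_left₀ hθ0 (le_max_left _ _) _
    _ = θ' ^ (⌊t⌋₊ : ℝ) := (Real.rpow_natCast _ _).symm
    _ ≤ θ' ^ (t - 1) := Real.rpow_le_rpow_of_exponent_ge h0 h1.le (Nat.sub_one_lt_floor t).le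
    _ = θ'⁻¹ * Real.exp (-(-Real.log θ') * t) := by
          rw [Real.rpow_sub_one h0.ne', Real.rpow_def_of_pos h0, neg_neg, div_eq_inv_mul]

section StoppedGenerator

variable {K : Type*} [Fintype K] [DecidableEq K] {k : K → K → ℝ} {H : Finset K}

theorem gen_apply_of_ne {x y : K} (hxy : x ≠ y) : gen k x y = k x y :=
  if_neg hxy

theorem gen_mulVec_one : gen k *ᵥ 1 = 0 := by
  ext x
  rw [mulVec, dotProduct, ← Finset.add_sum_erase _ _ (Finset.mem_univ x),
    Finset.sum_congr rfl fun y hy => by rw [gen_apply_of_ne (Finset.ne_of_mem_erase hy).symm]]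
  simp [gen]

theorem genH_apply_of_mem {x : K} (hx : x ∈ H) (y : K) : genH k H x y = gen k x y :=
  if_pos hx

theorem genH_row_of_notMem {x : K} (hx : x ∉ H) : genH k H x = 0 :=
  funext fun _ => if_neg hx

theorem genH_mulVec_one : genH k H *ᵥ 1 = 0 := by
  ext x
  by_cases hx : x ∈ H
  · simpa [mulVec, dotProduct, genH_apply_of_mem hx] using congr_fun (gen_mulVec_one (k := k)) x
  · simp [mulVec, genH_row_of_notMem hx]

theorem isMetzler_genH (hk : ∀ x y : K, x ≠ y → 0 ≤ k x y) : (genH k H).IsMetzler := by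
  intro x y hxy
  by_cases hx : x ∈ H
  · rw [genH_apply_of_mem hx, gen_apply_of_ne hxy]
    exact hk x y hxy
  · simp [genH_row_of_notMem hx]

theorem exists_reflTransGen_genH_notMem (hirr : StronglyConnected k) {y : K} (hy : y ∉ H)
    (x : K) : ∃ z ∉ H, Relation.ReflTransGen (fun a b => 0 < genH k H a b) x z := by
  induction hirr x y using Relation.ReflTransGen.head_induction_on with
  | refl => exact ⟨y, hy, .refl⟩
  | @head a c hac _ ih =>
    obtain ⟨z, hz, hcz⟩ := ih
    by_cases ha : a ∈ H
    · rcases eq_or_ne a c with rfl | hne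
      · exact ⟨z, hz, hcz⟩
      · exact ⟨z, hz, .head (by rwa [genH_apply_of_mem ha, gen_apply_of_ne hne]) hcz⟩
    · exact ⟨a, ha, .refl⟩

end StoppedGenerator

theorem stopped_semigroup_exponential_decay_general
    {K : Type*} [Fintype K] [DecidableEq K]
    (k : K → K → ℝ) (hk : ∀ x y : K, x ≠ y → 0 ≤ k x y)
    (hirr : StronglyConnected k)
    (H : Finset K) (hHproper : H ≠ Finset.univ) :
    ∃ C : ℝ, 0 ≤ C ∧ ∃ c : ℝ, 0 < c ∧
      (∀ t : ℝ, 0 ≤ t → ∀ x y : K, x ∈ H → y ∈ H →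
        NormedSpace.exp (t • genH k H) x y ≤ C * Real.exp (-c * t)) ∧
      (∀ t : ℝ, 0 ≤ t → ∀ x : K,
        (NormedSpace.exp (t • genH k H)).mulVec
          (fun y => if y ∈ H then (1 : ℝ) else 0) x ≤ C * Real.exp (-c * t)) := by
  obtain ⟨y₀, hy₀⟩ : ∃ y, y ∉ H := by simpa [Finset.eq_univ_iff_forall] using hHproper
  have hA : (genH k H).IsMetzler := isMetzler_genH hk
  obtain ⟨θ, hθ0, hθ1, hcontr⟩ := hA.exists_exp_mulVec_indicator_le genH_mulVec_one H
    (fun x hx => genH_row_of_notMem hx) (fun x _ => exists_reflTransGen_genH_notMem hirr hy₀ x)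
  obtain ⟨C, hC, c, hc, hdecay⟩ := exists_pow_floor_le_exp hθ0 hθ1
  have hv0 : 0 ≤ fun y => if y ∈ H then (1 : ℝ) else 0 := fun y => by
    simp only [Pi.zero_apply]; split_ifs <;> norm_num
  have hv1 : (fun y => if y ∈ H then (1 : ℝ) else 0) ≤ 1 := fun y => by
    simp only [Pi.one_apply]; split_ifs <;> norm_num
  have hescape : ∀ t : ℝ, 0 ≤ t → ∀ x : K,
      (NormedSpace.exp (t • genH k H) *ᵥ fun y => if y ∈ H then (1 : ℝ) else 0) x ≤
        C * Real.exp (-c * t) := fun t ht x =>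
    (hA.exp_smul_mulVec_le_pow_floor genH_mulVec_one hv1 hθ0 hcontr ht x).trans (hdecay t ht)
  refine ⟨C, hC, c, hc, fun t ht x y _ hy => ?_, hescape⟩
  calc NormedSpace.exp (t • genH k H) x y
      = NormedSpace.exp (t • genH k H) x y * (if y ∈ H then (1 : ℝ) else 0) := by simp [hy]
    _ ≤ _ := apply_mul_le_mulVec (hA.smul ht).exp_apply_nonneg hv0 x y
    _ ≤ _ := hescape t ht x

/-- There are constants `C ≥ 0` and `c > 0` such that the matrix exponential of the stopped
generator decays exponentially: `(e^{t L_H})_{x,y} ≤ C e^{-c t}` for `x, y ∈ H` and `t ≥ 0`;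
in particular `(e^{t L_H} 1_H)(x) ≤ C e^{-c t}` for all `x`. -/
theorem stopped_semigroup_exponential_decay
    {K : Type*} [Fintype K] [DecidableEq K] (hcard : 2 ≤ Fintype.card K)
    (k : K → K → ℝ) (hk : ∀ x y : K, x ≠ y → 0 ≤ k x y)
    (hirr : StronglyConnected k)
    (H : Finset K) (hH : H.Nonempty) (hHproper : H ≠ Finset.univ) :
    ∃ C : ℝ, 0 ≤ C ∧ ∃ c : ℝ, 0 < c ∧
      (∀ t : ℝ, 0 ≤ t → ∀ x y : K, x ∈ H → y ∈ H →
        NormedSpace.exp (t • genH k H) x y ≤ C * Real.exp (-c * t)) ∧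
      (∀ t : ℝ, 0 ≤ t → ∀ x : K,
        (NormedSpace.exp (t • genH k H)).mulVec
          (fun y => if y ∈ H then (1 : ℝ) else 0) x ≤ C * Real.exp (-c * t)) :=
  stopped_semigroup_exponential_decay_general k hk hirr H hHproper
end

section
/- Let H ⊊ K be a nonempty proper subset, f : K → ℝ, and let L_H be the K×K matrix whose rows indexed by x ∈ H equal the corresponding rows of L and whose rows indexed by x ∉ H are zero. Set f_H(x) = f(x) for x ∈ H and f_H(x) = 0 for x ∉ H. Then V_H(x) = ∫₀^∞ (e^{t L_H} f_H)(x) dt converges for every x, and V_H is the unique function on K satisfying LV_H(x) + f(x) = 0 for all x ∈ H and V_H(x) = 0 for all x ∉ H. -/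
/-!
For `t ≥ 0` the matrix `e^{t L_H}` is row-stochastic (`L_H` has nonnegative off-diagonal
entries and zero row sums), and its rows outside `H` are rows of the identity. By the maximum
principle (irreducibility, and an exit from `H`) the Dirichlet problem `L u = -v` on `H`,
`u = 0` off `H`, is uniquely solvable. Its solution `g` for `v = 1_H` (the expected exit time)
satisfies `d/dt e^{t L_H} g = -e^{t L_H} 1_H`, so the survival probability
`t ↦ (e^{t L_H} 1_H)(x)` has integral over `[0, T]` at most `g x + ∑ |g|`; a multiple of it
dominates the integrand of `V_H`, which is therefore integrable. Then
`L_H V_H = ∫ d/dt (e^{t L_H} f_H) dt = -f_H`, since an integrable function with integrable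
derivative tends to `0`.
-/

open scoped Classical

namespace Matrix

theorem abs_mulVec_apply_le {n R : Type*} [Fintype n] [CommRing R] [LinearOrder R]
    [IsOrderedRing R] {M : Matrix n n R} (hM : ∀ i j, 0 ≤ M i j) {v w : n → R}
    (hvw : ∀ j, |v j| ≤ w j) (i : n) : |(M *ᵥ v) i| ≤ (M *ᵥ w) i :=
  calc |(M *ᵥ v) i| ≤ ∑ j, |M i j * v j| := Finset.abs_sum_le_sum_abs _ _
    _ ≤ (M *ᵥ w) i := Finset.sum_le_sum fun j _ => by
      rw [abs_mul, abs_of_nonneg (hM i j)]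
      exact mul_le_mul_of_nonneg_left (hvw j) (hM i j)

open NormedSpace MeasureTheory Filter Set

variable {n : Type*} [Fintype n] [DecidableEq n]

theorem exp_apply_nonneg_s4 {B : Matrix n n ℝ} (hB : ∀ i j, 0 ≤ B i j) (i j : n) :
    0 ≤ exp B i j :=
  have h := open scoped Matrix.Norms.Operator in exp_series_hasSum_exp' (𝕂 := ℝ) B
  (Pi.hasSum.mp (Pi.hasSum.mp h i) j).nonneg fun m =>
    mul_nonneg (by positivity) (pow_apply_nonneg hB m i j)

theorem exp_smul_apply_nonneg_of_offDiag_nonneg {A : Matrix n n ℝ}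
    (hA : ∀ i j, i ≠ j → 0 ≤ A i j) {t : ℝ} (ht : 0 ≤ t) (i j : n) : 0 ≤ exp (t • A) i j := by
  set c := ∑ l, |A l l|
  have hB (i j : n) : 0 ≤ (t • (A + c • 1)) i j := by
    refine mul_nonneg ht ?_
    rcases eq_or_ne i j with rfl | hij
    · have : |A i i| ≤ c :=
        Finset.single_le_sum (f := fun l => |A l l|) (fun _ _ => abs_nonneg _) (Finset.mem_univ i)
      simp only [add_apply, smul_apply, one_apply_eq, smul_eq_mul, mul_one]
      linarith [neg_abs_le (A i i)]
    · simpa [one_apply_ne hij] using hA i j hij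
  have hexp : exp (t • A) = Real.exp (-(t * c)) • exp (t • (A + c • 1)) := by
    have hsplit : t • A = t • (A + c • 1) + algebraMap ℝ (Matrix n n ℝ) (-(t * c)) := by
      rw [Algebra.algebraMap_eq_smul_one]; module
    rw [hsplit, exp_add_of_commute _ _ (Algebra.commute_algebraMap_right _ _),
      show exp (algebraMap ℝ (Matrix n n ℝ) (-(t * c))) = algebraMap ℝ _ (exp (-(t * c))) from
        open scoped Matrix.Norms.Operator in
          (map_exp (algebraMap ℝ (Matrix n n ℝ)) (continuous_algebraMap _ _) _).symm,
      Algebra.algebraMap_eq_smul_one, mul_smul_comm, mul_one, Real.exp_eq_exp_ℝ]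
  rw [hexp, smul_apply, smul_eq_mul]
  exact mul_nonneg (Real.exp_nonneg _) (exp_apply_nonneg_s4 hB i j)

theorem hasDerivAt_exp_smul_mulVec (A : Matrix n n ℝ) (v : n → ℝ) (t : ℝ) :
    HasDerivAt (fun s : ℝ => exp (s • A) *ᵥ v) (exp (t • A) *ᵥ (A *ᵥ v)) t := by
  let mulVecCLM : Matrix n n ℝ →L[ℝ] n → ℝ :=
    { toFun M := M *ᵥ v
      map_add' M N := add_mulVec M N v
      map_smul' c M := smul_mulVec c M v
      cont := continuous_id.matrix_mulVec continuous_const }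
  rw [mulVec_mulVec]
  open scoped Matrix.Norms.Operator in
  exact mulVecCLM.hasFDerivAt.comp_hasDerivAt t (hasDerivAt_exp_smul_const A t)

theorem continuous_exp_smul_mulVec_apply (A : Matrix n n ℝ) (v : n → ℝ) (x : n) :
    Continuous fun t : ℝ => (exp (t • A) *ᵥ v) x :=
  (continuous_apply x).comp
    (continuous_iff_continuousAt.mpr fun t => (hasDerivAt_exp_smul_mulVec A v t).continuousAt)

theorem exp_smul_mulVec_eq_self_of_mulVec_eq_zero {A : Matrix n n ℝ} {v : n → ℝ}
    (hv : A *ᵥ v = 0) (t : ℝ) : exp (t • A) *ᵥ v = v := by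
  have hderiv (s : ℝ) : HasDerivAt (fun s : ℝ => exp (s • A) *ᵥ v) 0 s := by
    simpa [hv] using hasDerivAt_exp_smul_mulVec A v s
  simpa using is_const_of_deriv_eq_zero (fun s => (hderiv s).differentiableAt)
    (fun s => (hderiv s).deriv) t 0

theorem exp_smul_mulVec_apply_eq_self_of_row_eq_zero {A : Matrix n n ℝ} {x : n}
    (hx : ∀ y, A x y = 0) (v : n → ℝ) (t : ℝ) : (exp (t • A) *ᵥ v) x = v x := by
  have hderiv (s : ℝ) : HasDerivAt (fun s : ℝ => (exp (s • A) *ᵥ v) x) 0 s := by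
    have hcomm : exp (s • A) * A = A * exp (s • A) :=
      (((Commute.refl A).smul_left s).exp_left).eq
    have h := hasDerivAt_pi.mp (hasDerivAt_exp_smul_mulVec A v s) x
    rw [mulVec_mulVec, hcomm, ← mulVec_mulVec, mulVec, dotProduct, funext hx] at h
    simpa using h
  simpa using is_const_of_deriv_eq_zero (fun s => (hderiv s).differentiableAt)
    (fun s => (hderiv s).deriv) t 0

theorem mulVec_integral_exp_smul_mulVec_eq_neg {A : Matrix n n ℝ} {v : n → ℝ}
    (hv : ∀ x, IntegrableOn (fun t : ℝ => (exp (t • A) *ᵥ v) x) (Ioi 0))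
    (hAv : ∀ x, IntegrableOn (fun t : ℝ => (exp (t • A) *ᵥ (A *ᵥ v)) x) (Ioi 0)) :
    A *ᵥ (fun x => ∫ t in Ioi (0 : ℝ), (exp (t • A) *ᵥ v) x) = -v := by
  funext x
  have hderiv (t : ℝ) :
      HasDerivAt (fun s => (exp (s • A) *ᵥ v) x) ((exp (t • A) *ᵥ (A *ᵥ v)) x) t :=
    hasDerivAt_pi.mp (hasDerivAt_exp_smul_mulVec A v t) x
  have hftc := integral_Ioi_of_hasDerivAt_of_tendsto
    (continuous_exp_smul_mulVec_apply A v x).continuousWithinAt (fun t _ => hderiv t) (hAv x)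
    (tendsto_zero_of_hasDerivAt_of_integrableOn_Ioi (fun t _ => hderiv t) (hAv x) (hv x))
  have hcomm (t : ℝ) : A *ᵥ (exp (t • A) *ᵥ v) = exp (t • A) *ᵥ (A *ᵥ v) := by
    rw [mulVec_mulVec, mulVec_mulVec, (((Commute.refl A).smul_left t).exp_left).eq]
  calc (A *ᵥ fun y => ∫ t in Ioi (0 : ℝ), (exp (t • A) *ᵥ v) y) x
      = ∫ t in Ioi (0 : ℝ), (A *ᵥ (exp (t • A) *ᵥ v)) x := by
        simp only [mulVec, dotProduct, ← integral_const_mul]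
        exact (integral_finsetSum _ fun y _ => (hv y).const_mul _).symm
    _ = -v x := by simp only [hcomm, hftc, zero_smul, exp_zero, one_mulVec, zero_sub]

structure IsRateMatrix (A : Matrix n n ℝ) : Prop where
  offDiag_nonneg : ∀ i j, i ≠ j → 0 ≤ A i j
  mulVec_one : A *ᵥ 1 = 0

namespace IsRateMatrix

variable {A : Matrix n n ℝ}

theorem exp_smul_mem_rowStochastic (hA : A.IsRateMatrix) {t : ℝ} (ht : 0 ≤ t) :
    exp (t • A) ∈ rowStochastic ℝ n :=
  mem_rowStochastic.mpr ⟨exp_smul_apply_nonneg_of_offDiag_nonneg hA.offDiag_nonneg ht,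
    exp_smul_mulVec_eq_self_of_mulVec_eq_zero hA.mulVec_one t⟩

/-- `g` plays the role of the expected exit time: `∫₀ᵀ (e^{tA} h) x dt = g x - (e^{TA} g) x`. -/
theorem integrableOn_exp_smul_mulVec_of_mulVec_eq_neg (hA : A.IsRateMatrix) {g h : n → ℝ}
    (hh : 0 ≤ h) (hg : A *ᵥ g = -h) (x : n) :
    IntegrableOn (fun t : ℝ => (exp (t • A) *ᵥ h) x) (Ioi 0) := by
  have hcont := continuous_exp_smul_mulVec_apply A h x
  refine integrableOn_Ioi_of_intervalIntegral_norm_bounded (g x + ∑ y, |g y|) 0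
    (fun T => hcont.integrableOn_Ioc) tendsto_id ?_
  filter_upwards [eventually_ge_atTop 0] with T hT
  have hP := hA.exp_smul_mem_rowStochastic hT
  have hftc : ∫ t in 0..T, (exp (t • A) *ᵥ h) x = g x - (exp (T • A) *ᵥ g) x := by
    have hderiv (t : ℝ) :
        HasDerivAt (fun s => -(exp (s • A) *ᵥ g) x) ((exp (t • A) *ᵥ h) x) t := by
      have := (hasDerivAt_pi.mp (hasDerivAt_exp_smul_mulVec A g t) x).neg
      rwa [hg, mulVec_neg, Pi.neg_apply, neg_neg] at this
    rw [intervalIntegral.integral_eq_sub_of_hasDerivAt (fun t _ => hderiv t)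
      (hcont.intervalIntegrable 0 T)]
    simp only [zero_smul, exp_zero, one_mulVec]
    ring
  have hlower : -∑ y, |g y| ≤ (exp (T • A) *ᵥ g) x := by
    have hbound := abs_mulVec_apply_le (M := exp (T • A))
      (fun _ _ => nonneg_of_mem_rowStochastic hP) (w := fun _ => ∑ y, |g y|)
      (fun j => Finset.single_le_sum (fun y _ => abs_nonneg (g y)) (Finset.mem_univ j)) x
    simp only [mulVec, dotProduct, ← Finset.sum_mul, sum_row_of_mem_rowStochastic hP,
      one_mul] at hbound
    exact neg_le_of_abs_le hbound
  calc ∫ t in 0..T, ‖(exp (t • A) *ᵥ h) x‖ = ∫ t in 0..T, (exp (t • A) *ᵥ h) x := by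
        refine intervalIntegral.integral_congr fun t ht => Real.norm_of_nonneg ?_
        rw [uIcc_of_le hT] at ht
        exact nonneg_mulVec_of_mem_rowStochastic (hA.exp_smul_mem_rowStochastic ht.1) hh x
    _ ≤ g x + ∑ y, |g y| := by linarith

theorem integrableOn_exp_smul_mulVec_of_abs_le (hA : A.IsRateMatrix) {v w : n → ℝ}
    (hvw : ∀ j, |v j| ≤ w j) {x : n}
    (hw : IntegrableOn (fun t : ℝ => (exp (t • A) *ᵥ w) x) (Ioi 0)) :
    IntegrableOn (fun t : ℝ => (exp (t • A) *ᵥ v) x) (Ioi 0) :=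
  hw.mono' (continuous_exp_smul_mulVec_apply A v x).aestronglyMeasurable <|
    ae_restrict_of_forall_mem measurableSet_Ioi fun _ ht =>
      (abs_mulVec_apply_le (fun _ _ => nonneg_of_mem_rowStochastic
        (hA.exp_smul_mem_rowStochastic (le_of_lt ht))) hvw x :)

end IsRateMatrix

end Matrix

section StoppedProcess

open NormedSpace MeasureTheory Set Matrix

variable {K : Type*} [Fintype K] [DecidableEq K] {k : K → K → ℝ} {H : Finset K}

theorem gen_mulVec_apply (W : K → ℝ) (x : K) :
    (gen k *ᵥ W) x = ∑ y, k x y * (W y - W x) := by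
  have hoff : ∀ y ∈ Finset.univ.erase x, gen k x y * W y = k x y * W y := fun y hy => by
    simp [gen, (Finset.ne_of_mem_erase hy).symm]
  rw [mulVec, dotProduct, ← Finset.add_sum_erase _ _ (Finset.mem_univ x),
    Finset.sum_congr rfl hoff, ← Finset.add_sum_erase _ _ (Finset.mem_univ x)]
  simp only [gen, of_apply, if_true, sub_self, mul_zero, zero_add, mul_sub,
    Finset.sum_sub_distrib, ← Finset.sum_mul]
  ring

theorem genH_mulVec_apply (W : K → ℝ) (x : K) :
    (genH k H *ᵥ W) x = if x ∈ H then (gen k *ᵥ W) x else 0 := by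
  by_cases hx : x ∈ H <;> simp [genH, mulVec, dotProduct, hx]

theorem isRateMatrix_genH (hk : ∀ x y : K, x ≠ y → 0 ≤ k x y) : (genH k H).IsRateMatrix where
  offDiag_nonneg x y hxy := by
    by_cases hx : x ∈ H <;> simp [genH, gen, hx, hxy, hk x y hxy]
  mulVec_one := by
    funext x
    simp [genH_mulVec_apply, gen_mulVec_apply]

theorem nonpos_of_subharmonic (hk : ∀ x y : K, x ≠ y → 0 ≤ k x y) (hirr : StronglyConnected k)
    (hH : H ≠ Finset.univ) {W : K → ℝ} (hW : ∀ x ∈ H, 0 ≤ (gen k *ᵥ W) x)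
    (hWc : ∀ x ∉ H, W x ≤ 0) (x : K) : W x ≤ 0 := by
  have : Nonempty K := ⟨x⟩
  obtain ⟨x₀, hx₀⟩ := Finite.exists_max W
  by_contra! hpos
  have hmax : ∀ y, Relation.ReflTransGen (fun a b => 0 < k a b) x₀ y → W y = W x₀ := by
    intro y hy
    induction hy with
    | refl => rfl
    | @tail b c _ hbc ih =>
      have hb : b ∈ H := by
        by_contra hb
        linarith [hWc b hb, hx₀ x]
      have hterm : ∀ y ∈ Finset.univ, k b y * (W y - W b) ≤ 0 := by
        intro y _
        rcases eq_or_ne b y with rfl | hby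
        · simp
        · exact mul_nonpos_of_nonneg_of_nonpos (hk b y hby) (by linarith [hx₀ y])
      have hsum : ∑ y, k b y * (W y - W b) = 0 :=
        le_antisymm (Finset.sum_nonpos hterm) (gen_mulVec_apply W b ▸ hW b hb)
      have hc := (Finset.sum_eq_zero_iff_of_nonpos hterm).mp hsum c (Finset.mem_univ c)
      rw [mul_eq_zero, or_iff_right hbc.ne', sub_eq_zero] at hc
      rw [hc, ih]
  obtain ⟨z, hz⟩ : ∃ z, z ∉ H := by
    by_contra! h
    exact hH (Finset.eq_univ_iff_forall.mpr h)
  linarith [hWc z hz, hmax z (hirr x₀ z), hx₀ x]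

theorem eq_zero_of_harmonic (hk : ∀ x y : K, x ≠ y → 0 ≤ k x y) (hirr : StronglyConnected k)
    (hH : H ≠ Finset.univ) {W : K → ℝ} (hW : ∀ x ∈ H, (gen k *ᵥ W) x = 0)
    (hWc : ∀ x ∉ H, W x = 0) : W = 0 := by
  funext x
  refine le_antisymm (nonpos_of_subharmonic hk hirr hH (fun x hx => (hW x hx).ge)
    (fun x hx => (hWc x hx).le) x) (neg_nonpos.mp ?_)
  refine nonpos_of_subharmonic (W := -W) hk hirr hH (fun x hx => ?_) (fun x hx => ?_) x
  · simp [mulVec_neg, hW x hx]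
  · simp [hWc x hx]

theorem existsUnique_poisson_dirichlet (hk : ∀ x y : K, x ≠ y → 0 ≤ k x y)
    (hirr : StronglyConnected k) (hH : H ≠ Finset.univ) (v : K → ℝ) :
    ∃! W : K → ℝ, (∀ x ∈ H, (gen k *ᵥ W) x = -v x) ∧ ∀ x ∉ H, W x = 0 := by
  -- Existence follows from uniqueness: the problem is a square linear system `B *ᵥ W = rhs`.
  let B : Matrix K K ℝ := of fun x y => if x ∈ H then gen k x y else (1 : Matrix K K ℝ) x y
  have hB (W : K → ℝ) (x : K) : (B *ᵥ W) x = if x ∈ H then (gen k *ᵥ W) x else W x := by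
    by_cases hx : x ∈ H <;> simp [B, mulVec, dotProduct, hx, one_apply]
  have hsolves (W : K → ℝ) : ((∀ x ∈ H, (gen k *ᵥ W) x = -v x) ∧ ∀ x ∉ H, W x = 0) ↔
      B *ᵥ W = fun x => if x ∈ H then -v x else 0 := by
    simp only [funext_iff, hB]
    refine ⟨fun ⟨hW, hWc⟩ x => ?_, fun h => ⟨fun x hx => ?_, fun x hx => ?_⟩⟩
    · by_cases hx : x ∈ H <;> simp [hx, hW, hWc]
    · simpa [hx] using h x
    · simpa [hx] using h x
  have hBinj : Function.Injective B.mulVec := fun W₁ W₂ h => by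
    have h' (x : K) : (if x ∈ H then (gen k *ᵥ W₁) x else W₁ x) =
        if x ∈ H then (gen k *ᵥ W₂) x else W₂ x := by
      rw [← hB, ← hB, h]
    refine sub_eq_zero.mp (eq_zero_of_harmonic hk hirr hH (fun x hx => ?_) fun x hx => ?_)
    · simpa [mulVec_sub, hx, sub_eq_zero] using h' x
    · simpa [hx, sub_eq_zero] using h' x
  obtain ⟨W, hW⟩ := mulVec_surjective_iff_isUnit.mpr (mulVec_injective_iff_isUnit.mp hBinj)
    fun x => if x ∈ H then -v x else 0
  exact ⟨W, (hsolves W).mpr hW, fun W' hW' => hBinj (((hsolves W').mp hW').trans hW.symm)⟩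

theorem integrableOn_exp_smul_genH_mulVec (hk : ∀ x y : K, x ≠ y → 0 ≤ k x y)
    (hirr : StronglyConnected k) (hH : H ≠ Finset.univ) {v : K → ℝ} (hv : ∀ y ∉ H, v y = 0)
    (x : K) : IntegrableOn (fun t : ℝ => (exp (t • genH k H) *ᵥ v) x) (Ioi 0) := by
  set h : K → ℝ := fun y => if y ∈ H then 1 else 0
  obtain ⟨g, ⟨hg, -⟩, -⟩ := existsUnique_poisson_dirichlet hk hirr hH h
  have hgh : genH k H *ᵥ g = -h := by
    funext y
    by_cases hy : y ∈ H <;> simp [genH_mulVec_apply, hy, hg, h]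
  have hh : 0 ≤ h := fun y => by by_cases hy : y ∈ H <;> simp [h, hy]
  have hvh (y : K) : |v y| ≤ ((∑ z, |v z|) • h) y := by
    by_cases hy : y ∈ H
    · simpa [h, hy] using Finset.single_le_sum (fun z _ => abs_nonneg (v z)) (Finset.mem_univ y)
    · simp [h, hy, hv y hy]
  refine (isRateMatrix_genH hk).integrableOn_exp_smul_mulVec_of_abs_le hvh ?_
  simpa [IntegrableOn, mulVec_smul] using
    ((isRateMatrix_genH hk).integrableOn_exp_smul_mulVec_of_mulVec_eq_neg hh hgh x).const_mul
      (∑ z, |v z|)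

end StoppedProcess

open Matrix in
theorem stopped_accumulation_solves_poisson_general
    {K : Type*} [Fintype K] [DecidableEq K]
    (k : K → K → ℝ) (hk : ∀ x y : K, x ≠ y → 0 ≤ k x y)
    (hirr : StronglyConnected k)
    (H : Finset K) (hHproper : H ≠ Finset.univ)
    (f : K → ℝ) (V : K → ℝ)
    (hV : ∀ x, V x = ∫ t in Set.Ioi (0 : ℝ),
        (NormedSpace.exp (t • genH k H)).mulVec (fun y => if y ∈ H then f y else 0) x) :
    (∀ x, MeasureTheory.IntegrableOn
        (fun t : ℝ => (NormedSpace.exp (t • genH k H)).mulVec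
          (fun y => if y ∈ H then f y else 0) x) (Set.Ioi 0)) ∧
    (∀ x ∈ H, (∑ y, k x y * (V y - V x)) + f x = 0) ∧
    (∀ x ∉ H, V x = 0) ∧
    (∀ U : K → ℝ,
      (∀ x ∈ H, (∑ y, k x y * (U y - U x)) + f x = 0) → (∀ x ∉ H, U x = 0) → U = V) := by
  set v : K → ℝ := fun y => if y ∈ H then f y else 0
  have hv : ∀ y ∉ H, v y = 0 := fun y hy => if_neg hy
  have hint := integrableOn_exp_smul_genH_mulVec hk hirr hHproper hv
  have hpoisson : genH k H *ᵥ V = -v := by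
    rw [funext hV]
    refine mulVec_integral_exp_smul_mulVec_eq_neg hint
      (integrableOn_exp_smul_genH_mulVec hk hirr hHproper fun y hy => ?_)
    simp [genH_mulVec_apply, hy]
  have hLV : ∀ x ∈ H, (gen k *ᵥ V) x = -f x := fun x hx => by
    simpa [genH_mulVec_apply, hx, v] using congrFun hpoisson x
  have hV0 : ∀ x ∉ H, V x = 0 := fun x hx => by
    have hrow (y : K) : genH k H x y = 0 := by simp [genH, hx]
    simp [hV, exp_smul_mulVec_apply_eq_self_of_row_eq_zero hrow, hv x hx]
  have hsum_iff (W : K → ℝ) (x : K) :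
      (∑ y, k x y * (W y - W x)) + f x = 0 ↔ (gen k *ᵥ W) x = -f x := by
    rw [gen_mulVec_apply, ← eq_neg_iff_add_eq_zero]
  exact ⟨hint, fun x hx => (hsum_iff V x).mpr (hLV x hx), hV0, fun U hU hU0 =>
    (existsUnique_poisson_dirichlet hk hirr hHproper f).unique
      ⟨fun x hx => (hsum_iff U x).mp (hU x hx), hU0⟩ ⟨hLV, hV0⟩⟩

/-- For a nonempty proper subset `H ⊊ K`, the stopped accumulation
`V_H(x) = ∫₀^∞ (e^{t L_H} f_H)(x) dt` converges, and `V_H` is the unique function with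
`L V_H + f = 0` on `H` and `V_H = 0` outside `H`. -/
theorem stopped_accumulation_solves_poisson
    {K : Type*} [Fintype K] [DecidableEq K]
    (k : K → K → ℝ) (hk : ∀ x y : K, x ≠ y → 0 ≤ k x y)
    (hirr : StronglyConnected k)
    (H : Finset K) (hH : H.Nonempty) (hHproper : H ≠ Finset.univ)
    (f : K → ℝ) (V : K → ℝ)
    (hV : ∀ x, V x = ∫ t in Set.Ioi (0 : ℝ),
        (NormedSpace.exp (t • genH k H)).mulVec (fun y => if y ∈ H then f y else 0) x) :
    (∀ x, MeasureTheory.IntegrableOn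
        (fun t : ℝ => (NormedSpace.exp (t • genH k H)).mulVec
          (fun y => if y ∈ H then f y else 0) x) (Set.Ioi 0)) ∧
    (∀ x ∈ H, (∑ y, k x y * (V y - V x)) + f x = 0) ∧
    (∀ x ∉ H, V x = 0) ∧
    (∀ U : K → ℝ,
      (∀ x ∈ H, (∑ y, k x y * (U y - U x)) + f x = 0) → (∀ x ∉ H, U x = 0) → U = V) :=
  stopped_accumulation_solves_poisson_general k hk hirr H hHproper f V hV
end

section
/- (Kirchhoff formula) The unique stationary distribution of the irreducible Markov jump process is given in terms of rooted spanning trees by ρ^s(x) = w(x)/W, where w(x) = ∑_{T rooted at x} ∏_{(u,u')∈T} k(u,u') and W = ∑_y w(y); that is, the vector x ↦ w(x)/W is a strictly positive probability vector satisfying ρ^s L = 0. -/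
open scoped Classical

/-- A spanning rooted forest of the digraph of `k`, encoded functionally: each non-fixed
vertex `z` carries the single outgoing arc `(z, F z)`, every vertex eventually reaches a
fixed point (the root of its tree, toward which all arcs of the tree are directed, so there
are no cycles), and every arc is an arc of the digraph. -/
def IsSpForest {K : Type*} (k : K → K → ℝ) (F : K → K) : Prop :=
  (∀ z, ∃ n : ℕ, F (F^[n] z) = F^[n] z) ∧ ∀ z, F z ≠ z → 0 < k z (F z)

/-- The weight of a forest: the product of the rates `k z (F z)` over its arcs. -/
noncomputable def forestWeight {K : Type*} [Fintype K] [DecidableEq K]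
    (k : K → K → ℝ) (F : K → K) : ℝ :=
  ∏ z ∈ Finset.univ.filter (fun z => F z ≠ z), k z (F z)

/-- A spanning tree rooted at `x`: a spanning forest whose only root is `x`. -/
def IsSpTree {K : Type*} [Fintype K] [DecidableEq K] (k : K → K → ℝ) (F : K → K) (x : K) :
    Prop :=
  IsSpForest k F ∧ Finset.univ.filter (fun z => F z = z) = {x}

/-- `w(x)`: the total weight of all spanning trees rooted at `x`. -/
noncomputable def treeWt {K : Type*} [Fintype K] [DecidableEq K] (k : K → K → ℝ) (x : K) : ℝ :=
  ∑ F ∈ Finset.univ.filter (fun F : K → K => IsSpTree k F x), forestWeight k F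

/-- `W = ∑_x w(x)`: the total weight of all rooted spanning trees. -/
noncomputable def treeWtTotal {K : Type*} [Fintype K] [DecidableEq K] (k : K → K → ℝ) : ℝ :=
  ∑ x, treeWt k x

/-!
For a fixed state `y`, both sides of the balance equation
`∑_{x ≠ y} w(x) k(x,y) = w(y) ∑_{z ≠ y} k(y,z)` enumerate the same weighted objects: maps
`G : K → K` under which every state flows into `y` and `y` is not fixed, so that the functional
graph of `G` has a single cycle and it passes through `y`; the weight of `G` is
`∏_z k(z, G z)`. On the left, such a `G` arises from a tree rooted at the predecessor `x` of `y`
on the cycle by adding the arc `(x, y)`; on the right, from a tree rooted at `y` by adding the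
arc `(y, G y)`. Strong connectivity provides a tree of positive weight at every root (follow
shortest paths), so `w > 0`.
-/

open Function Finset

section Iterates

variable {K : Type*} [DecidableEq K] {f : K → K}

theorem iterate_update_of_forall_ne {p q w : K} {n : ℕ} (h : ∀ m < n, f^[m] w ≠ p) {m : ℕ}
    (hm : m ≤ n) : (update f p q)^[m] w = f^[m] w := by
  induction m with
  | zero => rfl
  | succ m ih =>
    rw [iterate_succ_apply', iterate_succ_apply', ih (by omega)]
    exact update_of_ne (h m (by omega)) _ _

theorem exists_iterate_update_eq {p w : K} (q : K) (h : ∃ n, f^[n] w = p) :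
    ∃ n, (update f p q)^[n] w = p :=
  ⟨Nat.find h, by
    rw [iterate_update_of_forall_ne (fun m hm => Nat.find_min h hm) le_rfl]
    exact Nat.find_spec h⟩

end Iterates

section FunctionalGraphs

variable {K : Type*}

def IsArborescence (T : K → K) (x : K) : Prop :=
  T x = x ∧ ∀ z, ∃ n, T^[n] z = x

/-- The functional graph of `G` has a single cycle, and it passes through `y`. -/
def IsUnicycleThrough (G : K → K) (y : K) : Prop :=
  G y ≠ y ∧ ∀ z, ∃ n, G^[n] z = y

noncomputable def cyclePred (G : K → K) (y : K) : K :=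
  G^[minimalPeriod G y - 1] y

namespace IsArborescence

variable {T : K → K} {x : K}

theorem apply_eq_self_iff (hT : IsArborescence T x) {z : K} : T z = z ↔ z = x := by
  refine ⟨fun hz => ?_, fun hz => hz ▸ hT.1⟩
  obtain ⟨n, hn⟩ := hT.2 z
  rwa [iterate_fixed hz] at hn

theorem not_isPeriodicPt (hT : IsArborescence T x) {y : K} (hy : y ≠ x) {p : ℕ} (hp : 0 < p) :
    ¬IsPeriodicPt T p y := by
  intro hper
  obtain ⟨n, hn⟩ := hT.2 y
  have hreach : T^[p * n] y = x := by
    rw [← Nat.sub_add_cancel (Nat.le_mul_of_pos_left n hp), iterate_add_apply, hn,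
      iterate_fixed hT.1]
  exact hy ((hper.mul_const n).eq.symm.trans hreach)

variable [DecidableEq K]

theorem isUnicycleThrough_update_target (hT : IsArborescence T x) {y : K} (hxy : x ≠ y) :
    IsUnicycleThrough (update T x y) y := by
  refine ⟨?_, fun z => ?_⟩
  · rw [update_of_ne hxy.symm, Ne, hT.apply_eq_self_iff]
    exact hxy.symm
  · obtain ⟨n, hn⟩ := exists_iterate_update_eq y (hT.2 z)
    exact ⟨n + 1, by rw [iterate_succ_apply', hn, update_self]⟩

theorem isUnicycleThrough_update_root (hT : IsArborescence T x) {z : K} (hzx : z ≠ x) :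
    IsUnicycleThrough (update T x z) x :=
  ⟨by rwa [update_self], fun w => exists_iterate_update_eq z (hT.2 w)⟩

theorem update_root_self (hT : IsArborescence T x) (q : K) : update (update T x q) x x = T := by
  rw [update_idem, update_eq_self_iff, hT.1]

/-- The arc added at the root `x` closes the cycle exactly at `x`: the `T`-path from `y` to `x`
cannot return to `y` earlier, as `y` is not periodic for `T`. -/
theorem cyclePred_update (hT : IsArborescence T x) {y : K} (hxy : x ≠ y) :
    cyclePred (update T x y) y = x := by
  set G := update T x y
  have hreach : ∃ n, T^[n] y = x := hT.2 y
  set n := Nat.find hreach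
  have hagree : ∀ m ≤ n, G^[m] y = T^[m] y := fun m hm =>
    iterate_update_of_forall_ne (fun m hm => Nat.find_min hreach hm) hm
  have hGn : G^[n] y = x := (hagree n le_rfl).trans (Nat.find_spec hreach)
  have hper : IsPeriodicPt G (n + 1) y := by
    rw [IsPeriodicPt, IsFixedPt, iterate_succ_apply', hGn]
    exact update_self ..
  have hperiod : minimalPeriod G y = n + 1 := by
    refine le_antisymm (hper.minimalPeriod_le n.succ_pos) (Nat.succ_le_of_lt ?_)
    by_contra! hle
    have hpos := hper.minimalPeriod_pos n.succ_pos
    refine hT.not_isPeriodicPt hxy.symm hpos ?_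
    rw [IsPeriodicPt, IsFixedPt, ← hagree _ hle]
    exact iterate_minimalPeriod
  rw [cyclePred, hperiod, Nat.add_sub_cancel, hGn]

end IsArborescence

namespace IsUnicycleThrough

variable {G : K → K} {y : K}

theorem apply_cyclePred (hG : IsUnicycleThrough G y) : G (cyclePred G y) = y := by
  obtain ⟨n, hn⟩ := hG.2 (G y)
  have hper : IsPeriodicPt G (n + 1) y := by rwa [IsPeriodicPt, IsFixedPt, iterate_succ_apply]
  rw [cyclePred, ← iterate_succ_apply' G, Nat.succ_eq_add_one,
    Nat.sub_add_cancel (hper.minimalPeriod_pos n.succ_pos)]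
  exact iterate_minimalPeriod

theorem cyclePred_ne (hG : IsUnicycleThrough G y) : cyclePred G y ≠ y := by
  intro h
  have hpred := hG.apply_cyclePred
  rw [h] at hpred
  exact hG.1 hpred

variable [DecidableEq K]

theorem isArborescence_update {x : K} (hG : IsUnicycleThrough G y) (hx : ∃ j, G^[j] y = x) :
    IsArborescence (update G x x) x := by
  refine ⟨update_self .., fun w => ?_⟩
  obtain ⟨n, hn⟩ := hG.2 w
  obtain ⟨j, hj⟩ := hx
  obtain ⟨m, hm⟩ := exists_iterate_update_eq x ⟨j + n, by rw [iterate_add_apply, hn, hj]⟩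
  exact ⟨m, hm⟩

theorem isArborescence_update_cyclePred (hG : IsUnicycleThrough G y) :
    IsArborescence (update G (cyclePred G y) (cyclePred G y)) (cyclePred G y) :=
  hG.isArborescence_update ⟨_, rfl⟩

theorem update_update_cyclePred (hG : IsUnicycleThrough G y) :
    update (update G (cyclePred G y) (cyclePred G y)) (cyclePred G y) y = G := by
  rw [update_idem, update_eq_self_iff, hG.apply_cyclePred]

end IsUnicycleThrough

end FunctionalGraphs

section TreeSums

variable {K : Type*} [Fintype K] [DecidableEq K]

theorem isSpTree_iff {k : K → K → ℝ} {F : K → K} {x : K} :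
    IsSpTree k F x ↔ IsArborescence F x ∧ ∀ z, F z ≠ z → 0 < k z (F z) := by
  have hroots : univ.filter (fun z => F z = z) = {x} ↔ ∀ z, F z = z ↔ z = x := by
    simp [Finset.ext_iff]
  rw [IsSpTree, IsSpForest, hroots]
  constructor
  · rintro ⟨⟨hreach, hk⟩, hfix⟩
    refine ⟨⟨(hfix x).2 rfl, fun z => ?_⟩, hk⟩
    obtain ⟨n, hn⟩ := hreach z
    exact ⟨n, (hfix _).1 hn⟩
  · rintro ⟨hT, hk⟩
    refine ⟨⟨fun z => ?_, hk⟩, fun z => hT.apply_eq_self_iff⟩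
    obtain ⟨n, hn⟩ := hT.2 z
    exact ⟨n, by rw [hn, hT.1]⟩

theorem IsArborescence.forestWeight_eq (k : K → K → ℝ) {T : K → K} {x : K}
    (hT : IsArborescence T x) : forestWeight k T = ∏ z ∈ univ.erase x, k z (T z) := by
  unfold forestWeight
  congr 1
  ext z
  simp [hT.apply_eq_self_iff]

theorem IsArborescence.prod_update (k : K → K → ℝ) {T : K → K} {x : K}
    (hT : IsArborescence T x) (q : K) :
    ∏ z, k z (update T x q z) = forestWeight k T * k x q := by
  rw [← prod_erase_mul _ _ (mem_univ x), update_self, hT.forestWeight_eq k]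
  congr 1
  exact prod_congr rfl fun z hz => by rw [update_of_ne (ne_of_mem_erase hz)]

noncomputable def arborescences (x : K) : Finset (K → K) :=
  univ.filter (IsArborescence · x)

noncomputable def unicyclesThrough (y : K) : Finset (K → K) :=
  univ.filter (IsUnicycleThrough · y)

/-- Like `treeWt`, but summed over all trees on `K` rooted at `x`, not only those in the digraph
of `k`. -/
noncomputable def arborescenceWeight (k : K → K → ℝ) (x : K) : ℝ :=
  ∑ T ∈ arborescences x, forestWeight k T

theorem sum_arborescenceWeight_mul_rate_into (k : K → K → ℝ) (y : K) :
    ∑ x ∈ univ.erase y, arborescenceWeight k x * k x y =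
      ∑ G ∈ unicyclesThrough y, ∏ z, k z (G z) := by
  simp_rw [arborescenceWeight, sum_mul]
  rw [sum_sigma']
  refine sum_nbij' (fun p => update p.2 p.1 y)
    (fun G => ⟨cyclePred G y, update G (cyclePred G y) (cyclePred G y)⟩) ?_ ?_ ?_ ?_ ?_
  all_goals simp only [mem_sigma, mem_erase, arborescences, unicyclesThrough, mem_filter,
    mem_univ, and_true, true_and]
  · rintro ⟨x, T⟩ ⟨hxy, hT⟩
    exact hT.isUnicycleThrough_update_target hxy
  · intro G hG
    exact ⟨hG.cyclePred_ne, hG.isArborescence_update_cyclePred⟩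
  · rintro ⟨x, T⟩ ⟨hxy, hT⟩
    rw [hT.cyclePred_update hxy, hT.update_root_self]
  · intro G hG
    exact hG.update_update_cyclePred
  · rintro ⟨x, T⟩ ⟨-, hT⟩
    exact (hT.prod_update k y).symm

theorem arborescenceWeight_mul_sum_rate_out (k : K → K → ℝ) (y : K) :
    arborescenceWeight k y * ∑ z ∈ univ.erase y, k y z =
      ∑ G ∈ unicyclesThrough y, ∏ z, k z (G z) := by
  rw [arborescenceWeight, sum_mul_sum, ← sum_product']
  refine sum_nbij' (fun p => update p.1 y p.2) (fun G => (update G y y, G y)) ?_ ?_ ?_ ?_ ?_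
  all_goals simp only [mem_product, mem_erase, arborescences, unicyclesThrough, mem_filter,
    mem_univ, and_true, true_and]
  · rintro ⟨T, z⟩ ⟨hT, hzy⟩
    exact hT.isUnicycleThrough_update_root hzy
  · intro G hG
    exact ⟨hG.isArborescence_update ⟨0, rfl⟩, hG.1⟩
  · rintro ⟨T, z⟩ ⟨hT, -⟩
    rw [hT.update_root_self, update_self]
  · intro G _
    rw [update_idem, update_eq_self]
  · rintro ⟨T, z⟩ ⟨hT, -⟩
    exact (hT.prod_update k z).symm

theorem arborescenceWeight_balance (k : K → K → ℝ) (y : K) :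
    ∑ x ∈ univ.erase y, arborescenceWeight k x * k x y =
      arborescenceWeight k y * ∑ z ∈ univ.erase y, k y z := by
  rw [sum_arborescenceWeight_mul_rate_into, arborescenceWeight_mul_sum_rate_out]

end TreeSums

section Generator

variable {K : Type*} [Fintype K] [DecidableEq K]

theorem vecMul_gen_apply (k : K → K → ℝ) (v : K → ℝ) (y : K) :
    Matrix.vecMul v (gen k) y =
      ∑ x ∈ univ.erase y, v x * k x y - v y * ∑ z ∈ univ.erase y, k y z := by
  have hoff : ∀ x ∈ univ.erase y, v x * gen k x y = v x * k x y := fun x hx => by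
    simp [gen, ne_of_mem_erase hx]
  rw [Matrix.vecMul, dotProduct, ← sum_erase_add _ _ (mem_univ y), sum_congr rfl hoff]
  simp only [gen, Matrix.of_apply, if_true]
  ring

theorem vecMul_gen_arborescenceWeight (k : K → K → ℝ) :
    Matrix.vecMul (arborescenceWeight k) (gen k) = 0 := by
  funext y
  rw [vecMul_gen_apply, arborescenceWeight_balance, sub_self, Pi.zero_apply]

end Generator

section Positivity

variable {K : Type*}

def ReachesIn (r : K → K → Prop) : ℕ → K → K → Prop
  | 0, a, b => a = b
  | n + 1, a, b => ∃ c, r a c ∧ ReachesIn r n c b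

theorem exists_reachesIn_of_reflTransGen {r : K → K → Prop} {a b : K}
    (h : Relation.ReflTransGen r a b) : ∃ n, ReachesIn r n a b := by
  induction h using Relation.ReflTransGen.head_induction_on with
  | refl => exact ⟨0, rfl⟩
  | head hac _ ih =>
    obtain ⟨n, hn⟩ := ih
    exact ⟨n + 1, _, hac, hn⟩

variable [Fintype K] [DecidableEq K] {k : K → K → ℝ}

/-- Any choice of one positive-rate arc out of each `z ≠ x` that decreases `d` is a tree. -/
theorem exists_isSpTree_of_descent {x : K} (d : K → ℕ)
    (hd : ∀ z ≠ x, ∃ w, 0 < k z w ∧ d w < d z) : ∃ F, IsSpTree k F x := by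
  choose! s hs hds using hd
  refine ⟨update s x x, isSpTree_iff.2 ⟨⟨update_self .., fun z => ?_⟩, fun z hz => ?_⟩⟩
  · induction hdz : d z using Nat.strong_induction_on generalizing z with
    | _ n ih =>
      by_cases hzx : z = x
      · exact ⟨0, hzx⟩
      · obtain ⟨m, hm⟩ := ih _ (hdz ▸ hds z hzx) (s z) rfl
        exact ⟨m + 1, by rwa [iterate_succ_apply, update_of_ne hzx]⟩
  · have hzx : z ≠ x := by
      rintro rfl
      exact hz (update_self ..)
    rw [update_of_ne hzx]
    exact hs z hzx

theorem exists_isSpTree (hirr : StronglyConnected k) (x : K) : ∃ F, IsSpTree k F x := by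
  have hpath (z : K) := exists_reachesIn_of_reflTransGen (hirr z x)
  refine exists_isSpTree_of_descent (fun z => Nat.find (hpath z)) fun z hzx => ?_
  have hspec := Nat.find_spec (hpath z)
  cases hdz : Nat.find (hpath z) with
  | zero =>
    rw [hdz] at hspec
    exact absurd hspec hzx
  | succ m =>
    rw [hdz] at hspec
    obtain ⟨w, hw, hwx⟩ := hspec
    exact ⟨w, hw, Nat.lt_succ_of_le (Nat.find_min' _ hwx)⟩

theorem treeWt_pos (hirr : StronglyConnected k) (x : K) : 0 < treeWt k x := by
  obtain ⟨F, hF⟩ := exists_isSpTree hirr x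
  refine sum_pos (fun T hT => prod_pos fun z hz => ?_) ⟨F, by simpa using hF⟩
  exact (mem_filter.1 hT).2.1.2 z (mem_filter.1 hz).2

/-- Trees using an arc of zero rate have weight zero. -/
theorem treeWt_eq_arborescenceWeight (hk : ∀ x y : K, x ≠ y → 0 ≤ k x y) (x : K) :
    treeWt k x = arborescenceWeight k x := by
  refine sum_subset (fun T hT => ?_) fun T hT hnot => ?_
  · simp only [arborescences, mem_filter, mem_univ, true_and, isSpTree_iff] at hT ⊢
    exact hT.1
  · simp only [arborescences, mem_filter, mem_univ, true_and, isSpTree_iff, not_and,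
      not_forall, not_lt] at hT hnot
    obtain ⟨z, hz, hkz⟩ := hnot hT
    exact prod_eq_zero (mem_filter.2 ⟨mem_univ z, hz⟩)
      (le_antisymm hkz (hk z (T z) (Ne.symm hz)))

end Positivity

/-- Kirchhoff's formula: `x ↦ w(x)/W` is the unique stationary distribution, i.e. it is a
strictly positive probability vector with `ρˢ L = 0`. -/
theorem kirchhoff_formula
    {K : Type*} [Fintype K] [DecidableEq K] [Nonempty K]
    (k : K → K → ℝ) (hk : ∀ x y : K, x ≠ y → 0 ≤ k x y)
    (hirr : StronglyConnected k) :
    (∀ x, 0 < treeWt k x / treeWtTotal k) ∧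
    (∑ x, treeWt k x / treeWtTotal k = 1) ∧
    Matrix.vecMul (fun x => treeWt k x / treeWtTotal k) (gen k) = 0 := by
  have hW : 0 < treeWtTotal k := sum_pos (fun x _ => treeWt_pos hirr x) univ_nonempty
  refine ⟨fun x => div_pos (treeWt_pos hirr x) hW, ?_, ?_⟩
  · rw [← sum_div]
    exact div_self hW.ne'
  · have hρ : (fun x => treeWt k x / treeWtTotal k) =
        (treeWtTotal k)⁻¹ • arborescenceWeight k := by
      funext x
      rw [Pi.smul_apply, smul_eq_mul, treeWt_eq_arborescenceWeight hk, div_eq_inv_mul]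
    rw [hρ, Matrix.smul_vecMul, vecMul_gen_arborescenceWeight, smul_zero]
end

section
/- Let f : K → ℝ be centered, ⟨f⟩^s = 0, let V be the unique solution of LV + f = 0 with ⟨V⟩^s = 0, and for y ∈ K let V_y be the unique function satisfying LV_y(x) + f(x) = 0 for all x ≠ y and V_y(y) = 0 (the expected accumulation of f before first reaching y). Then for all x, y ∈ K: V(x) − V(y) = V_y(x). -/
open scoped Classical

/-!
`V - V_y` is harmonic for `L` at every state other than `y`. By the maximum principle on a
strongly connected graph, a function harmonic off `y` attains both its maximum and its minimum
at `y`, so it is constant, equal to its value `V y - V_y y = V y`.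
-/

open Finset

namespace MarkovGenerator

variable {K : Type*} [Fintype K] {k : K → K → ℝ}

/-- `(gen k *ᵥ h) x`, written without the diagonal entry. -/
def apply (k : K → K → ℝ) (h : K → ℝ) (x : K) : ℝ := ∑ z, k x z * (h z - h x)

theorem apply_sub (g h : K → ℝ) (x : K) : apply k (g - h) x = apply k g x - apply k h x := by
  simp only [apply, ← sum_sub_distrib, Pi.sub_apply]
  exact sum_congr rfl fun _ _ => by ring

theorem apply_neg (h : K → ℝ) (x : K) : apply k (-h) x = -apply k h x := by
  simp only [apply, ← sum_neg_distrib, Pi.neg_apply]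
  exact sum_congr rfl fun _ _ => by ring

theorem eq_of_isMax_of_apply_nonneg {W : K → ℝ} {x z : K} (hk : ∀ w, x ≠ w → 0 ≤ k x w)
    (hmax : ∀ w, W w ≤ W x) (hL : 0 ≤ apply k W x) (hxz : 0 < k x z) : W z = W x := by
  have hterm : ∀ w ∈ univ, k x w * (W w - W x) ≤ 0 := fun w _ => by
    rcases eq_or_ne x w with rfl | hw
    · simp
    · exact mul_nonpos_of_nonneg_of_nonpos (hk w hw) (sub_nonpos.2 (hmax w))
  have hzero := (sum_eq_zero_iff_of_nonpos hterm).1 (le_antisymm (sum_nonpos hterm) hL) z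
    (mem_univ z)
  linarith [(mul_eq_zero.1 hzero).resolve_left hxz.ne']

/-- Maximum principle. -/
theorem le_of_apply_nonneg_off (hk : ∀ x y : K, x ≠ y → 0 ≤ k x y)
    (hirr : StronglyConnected k) {y : K} {W : K → ℝ} (hW : ∀ x, x ≠ y → 0 ≤ apply k W x)
    (x : K) : W x ≤ W y := by
  obtain ⟨m, -, hm⟩ := exists_max_image univ W ⟨y, mem_univ y⟩
  -- the maximal value propagates along a path from a maximizer `m` to `y`
  suffices ∀ a, Relation.ReflTransGen (fun a b => 0 < k a b) a y → W a = W m → W y = W m by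
    rw [this m (hirr m y) rfl]
    exact hm x (mem_univ x)
  intro a hpath
  induction hpath using Relation.ReflTransGen.head_induction_on with
  | refl => exact id
  | @head a b hab _ ih =>
    intro ha
    rcases eq_or_ne a y with rfl | hay
    · exact ha
    · refine ih ((eq_of_isMax_of_apply_nonneg (hk a) (fun w => ?_) (hW a hay) hab).trans ha)
      rw [ha]
      exact hm w (mem_univ w)

theorem eq_of_apply_eq_zero_off (hk : ∀ x y : K, x ≠ y → 0 ≤ k x y)
    (hirr : StronglyConnected k) {y : K} {W : K → ℝ} (hW : ∀ x, x ≠ y → apply k W x = 0)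
    (x : K) : W x = W y := by
  have hle := le_of_apply_nonneg_off hk hirr (fun z hz => (hW z hz).ge) x
  have hge := le_of_apply_nonneg_off hk hirr (W := -W)
    (fun z hz => by rw [apply_neg, hW z hz, neg_zero]) x
  simp only [Pi.neg_apply, neg_le_neg_iff] at hge
  exact le_antisymm hle hge

end MarkovGenerator

open MarkovGenerator in
theorem quasipotential_difference_eq_stopped_accumulation_general
    {K : Type*} [Fintype K]
    (k : K → K → ℝ) (hk : ∀ x y : K, x ≠ y → 0 ≤ k x y)
    (hirr : StronglyConnected k)
    (f : K → ℝ)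
    (V : K → ℝ) (hV : ∀ x, (∑ y, k x y * (V y - V x)) + f x = 0)
    (y : K) (Vy : K → ℝ)
    (hVy : ∀ x, x ≠ y → (∑ z, k x z * (Vy z - Vy x)) + f x = 0)
    (hVy0 : Vy y = 0) :
    ∀ x, V x - V y = Vy x := by
  have hharm : ∀ x, x ≠ y → apply k (V - Vy) x = 0 := fun x hx => by
    rw [apply_sub]
    linarith [show apply k V x + f x = 0 from hV x, show apply k Vy x + f x = 0 from hVy x hx]
  intro x
  have hconst := eq_of_apply_eq_zero_off hk hirr hharm x
  simp only [Pi.sub_apply, hVy0, sub_zero] at hconst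
  linarith

/-- The difference of the centered quasipotential equals the expected accumulation before
first reaching `y`: `V(x) - V(y) = V_y(x)`. -/
theorem quasipotential_difference_eq_stopped_accumulation
    {K : Type*} [Fintype K] [DecidableEq K]
    (k : K → K → ℝ) (hk : ∀ x y : K, x ≠ y → 0 ≤ k x y)
    (hirr : StronglyConnected k)
    (ρ : K → ℝ) (hρpos : ∀ x, 0 < ρ x) (hρsum : ∑ x, ρ x = 1)
    (hρstat : Matrix.vecMul ρ (gen k) = 0)
    (f : K → ℝ) (hf : ∑ x, f x * ρ x = 0)
    (V : K → ℝ) (hV : ∀ x, (∑ y, k x y * (V y - V x)) + f x = 0)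
    (hVcent : ∑ x, V x * ρ x = 0)
    (y : K) (Vy : K → ℝ)
    (hVy : ∀ x, x ≠ y → (∑ z, k x z * (Vy z - Vy x)) + f x = 0)
    (hVy0 : Vy y = 0) :
    ∀ x, V x - V y = Vy x :=
  quasipotential_difference_eq_stopped_accumulation_general k hk hirr f V hV y Vy hVy hVy0
end

section
/- Let f : K → ℝ be centered, ⟨f⟩^s = 0, and let V be any solution of LV + f = 0 on K. Then for all x, y ∈ K: |V(x) − V(y)| ≤ ‖f‖ · min{τ(x,y), τ(y,x)}, where ‖f‖ = max_z |f(z)|. -/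
open scoped Classical

/-!
Fix `y`. Since `L τ(·,y) = -1` off `y` and `L V = -f`, the function `‖f‖ τ(·,y) ∓ V` is
superharmonic off `y`. On a strongly connected graph a function superharmonic off `y` attains its
minimum at `y` (a minimum propagates along every arc leaving a superharmonic point), which gives
`±(V x - V y) ≤ ‖f‖ τ(x,y)`; exchanging `x` and `y` gives the bound with `τ(y,x)`.
-/

section

open Finset

variable {K : Type*} [Fintype K] {k : K → K → ℝ}

lemma eq_of_superharmonic_at_min (hk : ∀ x y : K, x ≠ y → 0 ≤ k x y) {W : K → ℝ} {b c : K}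
    (hmin : ∀ z, W b ≤ W z) (hsup : ∑ z, k b z * (W z - W b) ≤ 0) (hbc : 0 < k b c) :
    W c = W b := by
  have hterm : ∀ z ∈ univ, 0 ≤ k b z * (W z - W b) := fun z _ => by
    rcases eq_or_ne z b with rfl | hz
    · simp
    · exact mul_nonneg (hk b z hz.symm) (sub_nonneg.mpr (hmin z))
  have hzero := (sum_eq_zero_iff_of_nonneg hterm).mp (le_antisymm hsup (sum_nonneg hterm)) c
    (mem_univ c)
  have := (mul_eq_zero.mp hzero).resolve_left hbc.ne'
  linarith

lemma StronglyConnected.le_of_superharmonic_off (hk : ∀ x y : K, x ≠ y → 0 ≤ k x y)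
    (hirr : StronglyConnected k) {y : K} {W : K → ℝ}
    (hsup : ∀ x, x ≠ y → ∑ z, k x z * (W z - W x) ≤ 0) (x : K) : W y ≤ W x := by
  obtain ⟨m, -, hm⟩ := exists_min_image univ W ⟨x, mem_univ x⟩
  have hmin : ∀ z, W m ≤ W z := fun z => hm z (mem_univ z)
  suffices ∀ c, Relation.ReflTransGen (fun a b => 0 < k a b) m c → W y = W m ∨ W c = W m by
    have hy : W y = W m := (this y (hirr m y)).elim id id
    rw [hy]
    exact hmin x
  intro c hc
  induction hc with
  | refl => exact Or.inr rfl
  | @tail b c _ hbc ih =>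
    rcases ih with hy | hb
    · exact Or.inl hy
    rcases eq_or_ne b y with rfl | hby
    · exact Or.inl hb
    · right
      rw [← hb] at hmin ⊢
      exact eq_of_superharmonic_at_min hk hmin (hsup b hby) hbc

lemma sub_le_mul_of_passageTime (hk : ∀ x y : K, x ≠ y → 0 ≤ k x y)
    (hirr : StronglyConnected k) {y : K} {t : K → ℝ} (ht0 : t y = 0)
    (ht : ∀ x, x ≠ y → ∑ z, k x z * (t z - t x) + 1 = 0) {f V : K → ℝ}
    (hV : ∀ x, ∑ z, k x z * (V z - V x) + f x = 0) {M : ℝ} (hM : ∀ z, f z ≤ M) (x : K) :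
    V x - V y ≤ M * t x := by
  have hsup : ∀ x, x ≠ y →
      ∑ z, k x z * ((M * t z - V z) - (M * t x - V x)) ≤ 0 := fun x hx => by
    have hsplit : ∑ z, k x z * ((M * t z - V z) - (M * t x - V x)) =
        M * ∑ z, k x z * (t z - t x) - ∑ z, k x z * (V z - V x) := by
      rw [mul_sum, ← sum_sub_distrib]
      exact sum_congr rfl fun z _ => by ring
    rw [hsplit, show ∑ z, k x z * (t z - t x) = -1 by linarith [ht x hx]]
    linarith [hV x, hM x]
  have := hirr.le_of_superharmonic_off hk hsup x
  rw [ht0, mul_zero] at this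
  linarith

lemma abs_sub_le_mul_of_passageTime (hk : ∀ x y : K, x ≠ y → 0 ≤ k x y)
    (hirr : StronglyConnected k) {y : K} {t : K → ℝ} (ht0 : t y = 0)
    (ht : ∀ x, x ≠ y → ∑ z, k x z * (t z - t x) + 1 = 0) {f V : K → ℝ}
    (hV : ∀ x, ∑ z, k x z * (V z - V x) + f x = 0) {M : ℝ} (hM : ∀ z, |f z| ≤ M) (x : K) :
    |V x - V y| ≤ M * t x := by
  have hV_neg : ∀ x, ∑ z, k x z * (-V z - -V x) + -f x = 0 := fun x => by
    have hsum : ∑ z, k x z * (-V z - -V x) = -∑ z, k x z * (V z - V x) := by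
      rw [← sum_neg_distrib]
      exact sum_congr rfl fun z _ => by ring
    linarith [hV x]
  rw [abs_sub_le_iff]
  constructor
  · exact sub_le_mul_of_passageTime hk hirr ht0 ht hV (fun z => (le_abs_self _).trans (hM z)) x
  · have := sub_le_mul_of_passageTime hk hirr ht0 ht hV_neg
      (fun z => (neg_le_abs _).trans (hM z)) x
    linarith

end

theorem quasipotential_difference_bound_general
    {K : Type*} [Fintype K] [Nonempty K]
    (k : K → K → ℝ) (hk : ∀ x y : K, x ≠ y → 0 ≤ k x y)
    (hirr : StronglyConnected k)
    (τ : K → K → ℝ) (hτ0 : ∀ z, τ z z = 0)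
    (hτ : ∀ z x, x ≠ z → (∑ y, k x y * (τ y z - τ x z)) + 1 = 0)
    (f : K → ℝ)
    (V : K → ℝ) (hV : ∀ x, (∑ y, k x y * (V y - V x)) + f x = 0) :
    ∀ x y, |V x - V y| ≤
      (Finset.univ.sup' Finset.univ_nonempty fun z => |f z|) * min (τ x y) (τ y x) := by
  set M := Finset.univ.sup' Finset.univ_nonempty fun z => |f z|
  have hfM : ∀ z, |f z| ≤ M := fun z => Finset.le_sup' (fun z => |f z|) (Finset.mem_univ z)
  have hbound : ∀ x y, |V x - V y| ≤ M * τ x y := fun x y =>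
    abs_sub_le_mul_of_passageTime (t := (τ · y)) hk hirr (hτ0 y) (hτ y) hV hfM x
  intro x y
  rcases min_choice (τ x y) (τ y x) with h | h <;> rw [h]
  · exact hbound x y
  · rw [abs_sub_comm]
    exact hbound y x

/-- Bound via mean first-passage times: `|V(x) - V(y)| ≤ ‖f‖ · min{τ(x,y), τ(y,x)}` with
`‖f‖ = max_z |f(z)|`. -/
theorem quasipotential_difference_bound
    {K : Type*} [Fintype K] [DecidableEq K] [Nonempty K]
    (k : K → K → ℝ) (hk : ∀ x y : K, x ≠ y → 0 ≤ k x y)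
    (hirr : StronglyConnected k)
    (ρ : K → ℝ) (hρpos : ∀ x, 0 < ρ x) (hρsum : ∑ x, ρ x = 1)
    (hρstat : Matrix.vecMul ρ (gen k) = 0)
    (τ : K → K → ℝ) (hτ0 : ∀ z, τ z z = 0)
    (hτ : ∀ z x, x ≠ z → (∑ y, k x y * (τ y z - τ x z)) + 1 = 0)
    (f : K → ℝ) (hf : ∑ x, f x * ρ x = 0)
    (V : K → ℝ) (hV : ∀ x, (∑ y, k x y * (V y - V x)) + f x = 0) :
    ∀ x y, |V x - V y| ≤
      (Finset.univ.sup' Finset.univ_nonempty fun z => |f z|) * min (τ x y) (τ y x) :=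
  quasipotential_difference_bound_general k hk hirr τ hτ0 hτ f V hV
end

section
/- (Matrix Forest Theorem, strongly connected case) Let ℒ = −L be the Laplacian matrix of the strongly connected weighted digraph G on n vertices. For every α > 0 the matrix I + αℒ is invertible and ((I + αℒ)^{−1})_{x,y} = (∑_{m=0}^{n−1} α^m w(ℱ^{x→y}_m)) / (∑_{m=0}^{n−1} α^m w(ℱ_m)), where ℱ^{x→y}_m is the set of rooted spanning forests of G with exactly m arcs in which x and y belong to the same tree and that tree is rooted at y, ℱ_m is the set of all rooted spanning forests with exactly m arcs, and w(·) denotes the sum over the set of the products of the arc weights k(u,u'). -/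
open scoped Classical

/-- `w(ℱ^{x→y}_m)`: total weight of spanning rooted forests with exactly `m` arcs in which
`x` and `y` lie in the same tree, rooted at `y`. -/
noncomputable def wForestTo {K : Type*} [Fintype K] [DecidableEq K]
    (k : K → K → ℝ) (m : ℕ) (x y : K) : ℝ :=
  ∑ F ∈ Finset.univ.filter
      (fun F : K → K => IsSpForest k F ∧
        (Finset.univ.filter (fun z => F z ≠ z)).card = m ∧ F y = y ∧ ∃ n : ℕ, F^[n] x = y),
    forestWeight k F

/-- `w(ℱ_m)`: total weight of all spanning rooted forests with exactly `m` arcs. -/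
noncomputable def wForestAll {K : Type*} [Fintype K] [DecidableEq K]
    (k : K → K → ℝ) (m : ℕ) : ℝ :=
  ∑ F ∈ Finset.univ.filter
      (fun F : K → K => IsSpForest k F ∧
        (Finset.univ.filter (fun z => F z ≠ z)).card = m),
    forestWeight k F

/-- The Laplacian matrix `ℒ = D - A` of the weighted digraph: `ℒ x y = -k x y` for `x ≠ y`
and `ℒ x x = ∑_{z ≠ x} k x z`. -/
noncomputable def lap {K : Type*} [Fintype K] [DecidableEq K] (k : K → K → ℝ) :
    Matrix K K ℝ :=
  Matrix.of fun x y => if x = y then ∑ z ∈ Finset.univ.erase x, k x z else -k x y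

/-!
Write `B x y` for the sum of `α ^ (#arcs) · w(F)` over the spanning forests `F` in which `x` lies
in the tree rooted at `y`, and `D` for the same sum over all spanning forests. The theorem
follows from `(I + αℒ) B = D • I` together with `D ≥ 1` (the empty forest).

Row `x` of this identity comes from cutting the arc out of `x`: forests in which `x` is not a
root correspond to pairs of a forest in which `x` is a root and a target `z` outside the tree of
`x`, with weight multiplied by `α k(x,z)`. On the diagonal this is exactly the identity. Off the
diagonal it writes `B x y` through the first arc of the path from `x` to `y`, and the remaining
terms of the Laplacian row cancel after exchanging the arc out of `x` with the arc `x → z`.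
-/

open Function Finset

namespace Function

variable {V : Type*}

def Reach (f : V → V) (a b : V) : Prop := ∃ n : ℕ, f^[n] a = b

variable {f : V → V} {a b c : V}

theorem Reach.refl (f : V → V) (a : V) : Reach f a a := ⟨0, rfl⟩

theorem Reach.trans (hab : Reach f a b) (hbc : Reach f b c) : Reach f a c := by
  obtain ⟨m, rfl⟩ := hab
  obtain ⟨n, rfl⟩ := hbc
  exact ⟨n + m, iterate_add_apply f n m a⟩

theorem reach_iff_eq_or_reach_apply : Reach f a b ↔ a = b ∨ Reach f (f a) b := by
  constructor
  · rintro ⟨_ | n, rfl⟩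
    exacts [Or.inl rfl, Or.inr ⟨n, (iterate_succ_apply f n a).symm⟩]
  · rintro (rfl | ⟨n, rfl⟩)
    exacts [Reach.refl f a, ⟨n + 1, iterate_succ_apply f n a⟩]

theorem Reach.eq_of_fixed (hab : Reach f a b) (ha : f a = a) : a = b := by
  obtain ⟨n, rfl⟩ := hab
  exact (iterate_fixed ha n).symm

theorem Reach.of_reach_fixed (hab : Reach f a b) (hac : Reach f a c) (hc : f c = c) :
    Reach f b c := by
  obtain ⟨m, rfl⟩ := hab
  obtain ⟨n, rfl⟩ := hac
  rcases le_total m n with h | h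
  · exact ⟨n - m, by rw [← iterate_add_apply, Nat.sub_add_cancel h]⟩
  · refine ⟨0, ?_⟩
    rw [iterate_zero_apply, ← Nat.sub_add_cancel h, iterate_add_apply, iterate_fixed hc]

variable [DecidableEq V] {x y w : V}

theorem iterate_update_eq_of_forall_lt {n : ℕ} (h : ∀ m < n, f^[m] a ≠ x) :
    (update f x w)^[n] a = f^[n] a := by
  induction n with
  | zero => rfl
  | succ n ih =>
    rw [iterate_succ_apply', iterate_succ_apply', ih fun m hm => h m (by omega),
      update_of_ne (h n n.lt_succ_self)]

theorem reach_update_iff_of_not_reach (h : ¬Reach f a x) :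
    Reach (update f x w) a b ↔ Reach f a b := by
  have heq (n : ℕ) : (update f x w)^[n] a = f^[n] a :=
    iterate_update_eq_of_forall_lt fun m _ hm => h ⟨m, hm⟩
  simp only [Reach, heq]

theorem Reach.update (h : Reach f a x) : Reach (update f x w) a x := by
  classical
  have hex : ∃ n, f^[n] a = x := h
  refine ⟨Nat.find hex, ?_⟩
  rw [iterate_update_eq_of_forall_lt fun m hm => Nat.find_min hex hm, Nat.find_spec hex]

theorem reach_update_iff_reach : Reach (update f x w) a x ↔ Reach f a x := by
  refine ⟨fun h => ?_, Reach.update⟩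
  simpa only [update_idem, update_eq_self] using h.update (w := f x)

theorem reach_update_self_left_iff (hxy : x ≠ y) (hw : ¬Reach f w x) :
    Reach (update f x w) x y ↔ Reach f w y := by
  rw [reach_iff_eq_or_reach_apply, Function.update_self, reach_update_iff_of_not_reach hw,
    or_iff_right hxy]

end Function

namespace IsSpForest

variable {K : Type*} {k : K → K → ℝ} {F : K → K}

theorem exists_root (hF : IsSpForest k F) (a : K) : ∃ r, F r = r ∧ Reach F a r :=
  let ⟨n, hn⟩ := hF.1 a
  ⟨_, hn, n, rfl⟩

theorem of_exists_root (hroot : ∀ a, ∃ r, F r = r ∧ Reach F a r)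
    (harc : ∀ a, F a ≠ a → 0 < k a (F a)) : IsSpForest k F := by
  refine ⟨fun a => ?_, harc⟩
  obtain ⟨r, hr, n, hn⟩ := hroot a
  exact ⟨n, by rw [hn, hr]⟩

theorem eq_of_iterate_succ (hF : IsSpForest k F) {a : K} {n : ℕ}
    (h : F^[n + 1] a = a) : F a = a := by
  obtain ⟨m, hm⟩ := hF.1 a
  have hper : F^[(n + 1) * m] a = a := by rw [iterate_mul]; exact iterate_fixed h m
  have hroot : F^[(n + 1) * m] a = F^[m] a := by
    rw [show (n + 1) * m = n * m + m by ring, iterate_add_apply, iterate_fixed hm]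
  rw [← hper, hroot, hm]

theorem not_reach_apply (hF : IsSpForest k F) {x : K} (hx : F x ≠ x) :
    ¬Reach F (F x) x := fun ⟨n, hn⟩ =>
  hx (hF.eq_of_iterate_succ (by rwa [iterate_succ_apply]))

variable [DecidableEq K]

theorem card_nonroots_lt [Fintype K] [Nonempty K] (hF : IsSpForest k F) :
    (univ.filter fun z => F z ≠ z).card < Fintype.card K := by
  obtain ⟨r, hr, -⟩ := hF.exists_root (Classical.arbitrary K)
  exact card_lt_univ_of_notMem (x := r) (by simp [hr])

theorem root_update_of_not_reach (hF : IsSpForest k F) {x w a : K} (hax : ¬Reach F a x) :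
    ∃ r, update F x w r = r ∧ Reach (update F x w) a r := by
  obtain ⟨r, hr, hreach⟩ := hF.exists_root a
  have hrx : r ≠ x := by rintro rfl; exact hax hreach
  exact ⟨r, by rw [update_of_ne hrx, hr], (reach_update_iff_of_not_reach hax).2 hreach⟩

theorem update_self (hF : IsSpForest k F) (x : K) : IsSpForest k (update F x x) := by
  refine of_exists_root (fun a => ?_) fun a ha => ?_
  · by_cases hax : Reach F a x
    · exact ⟨x, Function.update_self x x F, hax.update⟩
    · exact hF.root_update_of_not_reach hax
  · have hax : a ≠ x := by rintro rfl; simp at ha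
    rw [update_of_ne hax] at ha ⊢
    exact hF.2 a ha

theorem update_of_root (hF : IsSpForest k F) {x z : K} (hx : F x = x)
    (hzx : ¬Reach F z x) (hk : 0 < k x z) : IsSpForest k (update F x z) := by
  refine of_exists_root (fun a => ?_) fun a ha => ?_
  · by_cases hax : Reach F a x
    · obtain ⟨r, hr, hzr⟩ := hF.root_update_of_not_reach (w := z) hzx
      have hxz : Reach (update F x z) x z := ⟨1, by simp⟩
      exact ⟨r, hr, (hax.update.trans hxz).trans hzr⟩
    · exact hF.root_update_of_not_reach hax
  · rcases eq_or_ne a x with rfl | hax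
    · rwa [Function.update_self]
    · rw [update_of_ne hax] at ha ⊢
      exact hF.2 a ha

end IsSpForest

section ForestSum

variable {K : Type*} [Fintype K] [DecidableEq K] (k : K → K → ℝ) (α : ℝ)

noncomputable def scaledWeight (F : K → K) : ℝ :=
  α ^ (univ.filter fun z => F z ≠ z).card * forestWeight k F

noncomputable def forestSum (P : (K → K) → Prop) : ℝ :=
  ∑ F ∈ univ.filter (fun F => IsSpForest k F ∧ P F), scaledWeight k α F

variable {k α}

theorem scaledWeight_nonneg {F : K → K} (hF : IsSpForest k F) (hα : 0 ≤ α) :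
    0 ≤ scaledWeight k α F :=
  mul_nonneg (pow_nonneg hα _) (prod_nonneg fun z hz => (hF.2 z (mem_filter.1 hz).2).le)

theorem scaledWeight_update_of_root {G : K → K} {x z : K} (hx : G x = x) (hzx : z ≠ x) :
    scaledWeight k α (update G x z) = α * k x z * scaledWeight k α G := by
  have harcs : (univ.filter fun a => update G x z a ≠ a) =
      insert x (univ.filter fun a => G a ≠ a) := by
    ext a
    rcases eq_or_ne a x with rfl | hax <;> simp [*]
  have hxG : x ∉ univ.filter fun a => G a ≠ a := by simp [hx]
  have hprod : ∏ a ∈ univ.filter (fun a => G a ≠ a), k a (update G x z a) =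
      ∏ a ∈ univ.filter (fun a => G a ≠ a), k a (G a) :=
    prod_congr rfl fun a ha => by rw [update_of_ne (ne_of_mem_of_not_mem ha hxG)]
  unfold scaledWeight forestWeight
  rw [harcs, card_insert_of_notMem hxG, prod_insert hxG, Function.update_self, hprod, pow_succ]
  ring

theorem forestSum_congr {P Q : (K → K) → Prop} (h : ∀ F, IsSpForest k F → (P F ↔ Q F)) :
    forestSum k α P = forestSum k α Q := by
  unfold forestSum
  congr 1
  ext F
  simpa using fun hF => h F hF

theorem forestSum_split (P Q : (K → K) → Prop) :
    forestSum k α P =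
      forestSum k α (fun F => P F ∧ Q F) + forestSum k α (fun F => P F ∧ ¬Q F) := by
  unfold forestSum
  rw [← sum_filter_add_sum_filter_not _ Q]
  congr 2 <;> ext F <;> simp [and_assoc]

theorem scaledWeight_le_forestSum {P : (K → K) → Prop} {F : K → K} (hF : IsSpForest k F)
    (hP : P F) (hα : 0 ≤ α) : scaledWeight k α F ≤ forestSum k α P :=
  single_le_sum (s := univ.filter fun F => IsSpForest k F ∧ P F)
    (fun _ hG => scaledWeight_nonneg (mem_filter.1 hG).2.1 hα)
    (mem_filter.2 ⟨mem_univ _, hF, hP⟩)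

theorem one_le_forestSum_true (hα : 0 ≤ α) : 1 ≤ forestSum k α (fun _ => True) := by
  have hid : IsSpForest k (id : K → K) :=
    .of_exists_root (fun a => ⟨a, rfl, Reach.refl id a⟩) fun a ha => absurd rfl ha
  have hone : scaledWeight k α id = 1 := by simp [scaledWeight, forestWeight]
  exact hone ▸ scaledWeight_le_forestSum hid trivial hα

theorem sum_range_pow_mul_sum_forestWeight [Nonempty K] (P : (K → K) → Prop)
    (s : ℕ → Finset (K → K))
    (hs : ∀ m F, F ∈ s m ↔
      IsSpForest k F ∧ (univ.filter fun z => F z ≠ z).card = m ∧ P F) :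
    ∑ m ∈ range (Fintype.card K), α ^ m * ∑ F ∈ s m, forestWeight k F =
      forestSum k α P := by
  have hmaps : ∀ F ∈ univ.filter (fun F => IsSpForest k F ∧ P F),
      (univ.filter fun z => F z ≠ z).card ∈ range (Fintype.card K) :=
    fun F hF => mem_range.2 (mem_filter.1 hF).2.1.card_nonroots_lt
  unfold forestSum
  rw [← sum_fiberwise_of_maps_to hmaps]
  refine sum_congr rfl fun m _ => ?_
  rw [mul_sum]
  refine sum_congr (by ext F; simp [hs]; tauto) fun F hF => ?_
  rw [scaledWeight, (mem_filter.1 hF).2]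

/-- Cutting the arc out of a non-root `x` is a bijection onto the pairs (target `z`, forest in
which `x` is a root whose tree does not contain `z`). -/
theorem forestSum_nonroot_eq_sum_filter (x : K) (P : (K → K) → Prop) :
    forestSum k α (fun F => F x ≠ x ∧ P F) =
      ∑ z ∈ univ.filter (fun z => z ≠ x ∧ 0 < k x z), α * k x z *
        forestSum k α (fun G => G x = x ∧ ¬Reach G z x ∧ P (update G x z)) := by
  simp only [forestSum, mul_sum]
  rw [sum_sigma']
  refine sum_nbij' (fun F => ⟨F x, update F x x⟩) (fun p => update p.2 x p.1) ?_ ?_ ?_ ?_ ?_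
  · intro F hF
    simp only [mem_filter, mem_univ, true_and, mem_sigma] at hF ⊢
    obtain ⟨hFor, hx, hP⟩ := hF
    refine ⟨⟨hx, hFor.2 x hx⟩, hFor.update_self x, Function.update_self x x F, ?_, ?_⟩
    · rw [reach_update_iff_reach]
      exact hFor.not_reach_apply hx
    · simpa using hP
  · rintro ⟨z, G⟩ hG
    simp only [mem_filter, mem_univ, true_and, mem_sigma] at hG ⊢
    obtain ⟨⟨hzx, hkz⟩, hGor, hx, hzx', hP⟩ := hG
    exact ⟨hGor.update_of_root hx hzx' hkz, by simpa using hzx, hP⟩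
  · intro F _
    simp
  · rintro ⟨z, G⟩ hG
    simp only [mem_filter, mem_univ, true_and, mem_sigma] at hG
    simp [update_eq_self_iff, hG.2.2.1]
  · intro F hF
    simp only [mem_filter, mem_univ, true_and] at hF
    simpa using scaledWeight_update_of_root (α := α) (k := k) (Function.update_self x x F) hF.2.1

theorem forestSum_nonroot (hk : ∀ x y : K, x ≠ y → 0 ≤ k x y) (x : K)
    (P : (K → K) → Prop) :
    forestSum k α (fun F => F x ≠ x ∧ P F) =
      ∑ z ∈ univ.erase x, α * k x z *
        forestSum k α (fun G => G x = x ∧ ¬Reach G z x ∧ P (update G x z)) := by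
  rw [forestSum_nonroot_eq_sum_filter]
  refine sum_subset (fun z hz => ?_) fun z hz hzpos => ?_
  · simpa using (mem_filter.1 hz).2.1
  · have hzx : z ≠ x := ne_of_mem_erase hz
    have hkz : k x z = 0 :=
      le_antisymm (not_lt.1 fun h => hzpos (by simp [hzx, h])) (hk x z hzx.symm)
    simp [hkz]

variable (k α) in
noncomputable def forestMatrix : Matrix K K ℝ :=
  Matrix.of fun x y => forestSum k α (fun F => F y = y ∧ Reach F x y)

theorem forestMatrix_apply (x y : K) :
    forestMatrix k α x y = forestSum k α (fun F => F y = y ∧ Reach F x y) := rfl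

theorem forestMatrix_diag (hk : ∀ x y : K, x ≠ y → 0 ≤ k x y) (x : K) :
    forestMatrix k α x x +
        α * ∑ z ∈ univ.erase x, k x z * (forestMatrix k α x x - forestMatrix k α z x) =
      forestSum k α (fun _ => True) := by
  have hroot : forestMatrix k α x x = forestSum k α (fun F => F x = x) :=
    forestSum_congr fun F _ => and_iff_left (Reach.refl F x)
  have hdiff (z : K) : forestMatrix k α x x - forestMatrix k α z x =
      forestSum k α (fun G => G x = x ∧ ¬Reach G z x) := by
    rw [hroot, forestSum_split (fun F => F x = x) (fun F => Reach F z x), forestMatrix_apply]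
    ring
  have hnonroot := forestSum_nonroot (α := α) hk x (fun _ => True)
  have htotal := forestSum_split (k := k) (α := α) (fun _ => True) (fun F => F x = x)
  simp only [and_true, true_and] at hnonroot htotal
  rw [htotal, hnonroot, ← hroot, mul_sum]
  simp only [hdiff, mul_assoc]

theorem forestMatrix_eq_sum_first_arc (hk : ∀ x y : K, x ≠ y → 0 ≤ k x y) {x y : K}
    (hxy : x ≠ y) :
    forestMatrix k α x y = ∑ z ∈ univ.erase x, α * k x z *
      forestSum k α (fun G => (G y = y ∧ Reach G z y) ∧ G x = x) := by
  have hnonroot : forestMatrix k α x y =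
      forestSum k α (fun F => F x ≠ x ∧ (F y = y ∧ Reach F x y)) :=
    forestSum_congr fun F _ => ⟨fun h => ⟨fun hx => hxy (h.2.eq_of_fixed hx), h⟩, And.right⟩
  rw [hnonroot, forestSum_nonroot hk]
  refine sum_congr rfl fun z _ => congrArg _ (forestSum_congr fun G _ => ?_)
  rw [update_of_ne hxy.symm]
  constructor
  · rintro ⟨hx, hzx, hy, hzy⟩
    exact ⟨⟨hy, (reach_update_self_left_iff hxy hzx).1 hzy⟩, hx⟩
  · rintro ⟨⟨hy, hzy⟩, hx⟩
    have hzx : ¬Reach G z x := fun hzx => hxy ((hzx.of_reach_fixed hzy hy).eq_of_fixed hx)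
    exact ⟨hx, hzx, hy, (reach_update_self_left_iff hxy hzx).2 hzy⟩

/-- The exchange `(z, F) ↦ (F x, F[x ↦ z])`: both sides cut the arc out of `x`, so they
expand into the same double sum with `z` and the target of the cut arc interchanged. -/
theorem sum_forestSum_exchange (hk : ∀ x y : K, x ≠ y → 0 ≤ k x y) {x y : K}
    (hxy : x ≠ y) :
    ∑ z ∈ univ.erase x, k x z *
        forestSum k α (fun F => ((F y = y ∧ Reach F z y) ∧ ¬F x = x) ∧ ¬Reach F z x) =
      ∑ z ∈ univ.erase x, k x z *
        forestSum k α (fun F => (F y = y ∧ Reach F x y) ∧ ¬Reach F z x) := by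
  set Φ : K → K → ℝ := fun z w => forestSum k α
    (fun G => G x = x ∧ G y = y ∧ Reach G z y ∧ ¬Reach G z x ∧ ¬Reach G w x)
  have hleft (z : K) :
      forestSum k α (fun F => ((F y = y ∧ Reach F z y) ∧ ¬F x = x) ∧ ¬Reach F z x) =
        ∑ w ∈ univ.erase x, α * k x w * Φ z w := by
    rw [forestSum_congr (Q := fun F => F x ≠ x ∧ F y = y ∧ Reach F z y ∧ ¬Reach F z x)
      fun F _ => by tauto, forestSum_nonroot hk]
    refine sum_congr rfl fun w _ => congrArg _ (forestSum_congr fun G _ => ?_)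
    simp only [update_of_ne hxy.symm, reach_update_iff_reach]
    by_cases hzx : Reach G z x
    · simp [hzx]
    · rw [reach_update_iff_of_not_reach hzx]
      tauto
  have hright (z : K) :
      forestSum k α (fun F => (F y = y ∧ Reach F x y) ∧ ¬Reach F z x) =
        ∑ w ∈ univ.erase x, α * k x w * Φ w z := by
    rw [forestSum_congr (Q := fun F => F x ≠ x ∧ F y = y ∧ Reach F x y ∧ ¬Reach F z x)
      fun F _ => ⟨fun h => ⟨fun hx => hxy (h.1.2.eq_of_fixed hx), by tauto⟩, by tauto⟩,
      forestSum_nonroot hk]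
    refine sum_congr rfl fun w _ => congrArg _ (forestSum_congr fun G _ => ?_)
    simp only [update_of_ne hxy.symm, reach_update_iff_reach]
    by_cases hwx : Reach G w x
    · simp [hwx]
    · rw [reach_update_self_left_iff hxy hwx]
      tauto
  simp only [hleft, hright, mul_sum]
  conv_rhs => rw [sum_comm]
  exact sum_congr rfl fun z _ => sum_congr rfl fun w _ => by ring

theorem forestMatrix_offDiag (hk : ∀ x y : K, x ≠ y → 0 ≤ k x y) {x y : K} (hxy : x ≠ y) :
    forestMatrix k α x y +
        α * ∑ z ∈ univ.erase x, k x z * (forestMatrix k α x y - forestMatrix k α z y) =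
      0 := by
  set C : K → ℝ := fun z => forestSum k α (fun F => (F y = y ∧ Reach F z y) ∧ F x = x)
  set E : K → ℝ := fun z =>
    forestSum k α (fun F => ((F y = y ∧ Reach F z y) ∧ ¬F x = x) ∧ ¬Reach F z x)
  set J : K → ℝ := fun z =>
    forestSum k α (fun F => (F y = y ∧ Reach F x y) ∧ ¬Reach F z x)
  have hdiff (z : K) : forestMatrix k α x y - forestMatrix k α z y = J z - C z - E z := by
    have hx := forestSum_split (k := k) (α := α) (fun F => F y = y ∧ Reach F x y)
      (fun F => Reach F z x)
    have hz := forestSum_split (k := k) (α := α) (fun F => F y = y ∧ Reach F z y)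
      (fun F => F x = x)
    have hz' := forestSum_split (k := k) (α := α)
      (fun F => (F y = y ∧ Reach F z y) ∧ ¬F x = x) (fun F => Reach F z x)
    have hcommon : forestSum k α
          (fun F => ((F y = y ∧ Reach F z y) ∧ ¬F x = x) ∧ Reach F z x) =
        forestSum k α (fun F => (F y = y ∧ Reach F x y) ∧ Reach F z x) := by
      refine forestSum_congr fun F _ => ⟨?_, ?_⟩
      · rintro ⟨⟨⟨hy, hzy⟩, -⟩, hzx⟩
        exact ⟨⟨hy, hzx.of_reach_fixed hzy hy⟩, hzx⟩
      · rintro ⟨⟨hy, hxy'⟩, hzx⟩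
        exact ⟨⟨⟨hy, hzx.trans hxy'⟩, fun hx => hxy (hxy'.eq_of_fixed hx)⟩, hzx⟩
    simp only [forestMatrix_apply, C, E, J]
    linarith
  have hfirst : α * ∑ z ∈ univ.erase x, k x z * C z = forestMatrix k α x y := by
    rw [forestMatrix_eq_sum_first_arc hk hxy, mul_sum]
    exact sum_congr rfl fun z _ => by ring
  have hexchange : ∑ z ∈ univ.erase x, k x z * E z = ∑ z ∈ univ.erase x, k x z * J z :=
    sum_forestSum_exchange hk hxy
  simp only [hdiff, mul_sub, sum_sub_distrib, hexchange, hfirst]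
  ring

theorem one_add_smul_lap_mul_apply (M : Matrix K K ℝ) (x y : K) :
    ((1 + α • lap k) * M) x y =
      M x y + α * ∑ z ∈ univ.erase x, k x z * (M x y - M z y) := by
  have hrow : ∑ z, lap k x z * M z y = ∑ z ∈ univ.erase x, k x z * (M x y - M z y) := by
    rw [← add_sum_erase _ _ (mem_univ x)]
    simp only [lap, Matrix.of_apply, if_true, sum_mul, mul_sub, sum_sub_distrib]
    rw [sub_eq_add_neg, ← sum_neg_distrib]
    congr 1
    exact sum_congr rfl fun z hz => by simp [(ne_of_mem_erase hz).symm]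
  rw [add_mul, one_mul, Matrix.smul_mul, Matrix.add_apply, Matrix.smul_apply, Matrix.mul_apply,
    hrow, smul_eq_mul]

theorem one_add_smul_lap_mul_forestMatrix (hk : ∀ x y : K, x ≠ y → 0 ≤ k x y) :
    (1 + α • lap k) * forestMatrix k α =
      forestSum k α (fun _ => True) • (1 : Matrix K K ℝ) := by
  ext x y
  rw [one_add_smul_lap_mul_apply, Matrix.smul_apply, Matrix.one_apply]
  rcases eq_or_ne x y with rfl | hxy
  · rw [if_pos rfl, smul_eq_mul, mul_one, forestMatrix_diag hk]
  · rw [if_neg hxy, smul_zero, forestMatrix_offDiag hk hxy]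

end ForestSum

theorem matrix_forest_theorem_general
    {K : Type*} [Fintype K] [DecidableEq K]
    (k : K → K → ℝ) (hk : ∀ x y : K, x ≠ y → 0 ≤ k x y) :
    ∀ α : ℝ, 0 < α →
      IsUnit (1 + α • lap k) ∧
      ∀ x y : K, (1 + α • lap k)⁻¹ x y =
        (∑ m ∈ Finset.range (Fintype.card K), α ^ m * wForestTo k m x y) /
        (∑ m ∈ Finset.range (Fintype.card K), α ^ m * wForestAll k m) := by
  intro α hα
  set D := forestSum k α (fun _ => True)
  have hD : D ≠ 0 := (one_pos.trans_le (one_le_forestSum_true hα.le)).ne'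
  have hinv : (1 + α • lap k) * (D⁻¹ • forestMatrix k α) = 1 := by
    rw [Matrix.mul_smul, one_add_smul_lap_mul_forestMatrix hk, smul_smul, inv_mul_cancel₀ hD,
      one_smul]
  refine ⟨(Matrix.isUnit_iff_isUnit_det _).2 (Matrix.isUnit_det_of_right_inverse hinv),
    fun x y => ?_⟩
  have : Nonempty K := ⟨x⟩
  have hnum :
      ∑ m ∈ range (Fintype.card K), α ^ m * wForestTo k m x y = forestMatrix k α x y :=
    sum_range_pow_mul_sum_forestWeight (fun F => F y = y ∧ Reach F x y) _
      fun m F => by simp [Reach]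
  have hden : ∑ m ∈ range (Fintype.card K), α ^ m * wForestAll k m = D :=
    sum_range_pow_mul_sum_forestWeight _ _ fun m F => by simp
  rw [Matrix.inv_eq_right_inv hinv, Matrix.smul_apply, smul_eq_mul, inv_mul_eq_div, hnum, hden]

/-- Matrix Forest Theorem (strongly connected case): for every `α > 0` the matrix `I + αℒ`
is invertible and
`((I + αℒ)⁻¹)_{x,y} = (∑_{m<n} αᵐ w(ℱ^{x→y}_m)) / (∑_{m<n} αᵐ w(ℱ_m))`. -/
theorem matrix_forest_theorem
    {K : Type*} [Fintype K] [DecidableEq K] (hcard : 2 ≤ Fintype.card K)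
    (k : K → K → ℝ) (hk : ∀ x y : K, x ≠ y → 0 ≤ k x y)
    (hirr : StronglyConnected k) :
    ∀ α : ℝ, 0 < α →
      IsUnit (1 + α • lap k) ∧
      ∀ x y : K, (1 + α • lap k)⁻¹ x y =
        (∑ m ∈ Finset.range (Fintype.card K), α ^ m * wForestTo k m x y) /
        (∑ m ∈ Finset.range (Fintype.card K), α ^ m * wForestAll k m) :=
  matrix_forest_theorem_general k hk
end
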